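/- Let (x₁, x₂, …, x_p) be a finite block basis of the unit vector basis of c₀₀ with ‖x_k‖_{T̃} = 1 for each k, and let i_k = max supp x_k. Then for all scalars (a_k), ‖Σ_{k=1}^p a_k x_k‖_{T̃} ≤ 2 ‖Σ_{k=1}^p a_k e_{i_k}‖_{T̈}, where (e_n) denotes the unit vector basis. (In particular, this inequality holds at every finite level: ‖Σ_{k=1}^p a_k x_k‖_n ≤ 2 ‖Σ_{k=1}^p a_k e_{i_k}‖′_n for all n ≥ 0.) -/

import Mathlib

/-!
Induction on `n`, for all subfamilies `S` of the blocks at once. At level `0`, a set `F ∈ S_α`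
meets the blocks `x_k`, `k ∈ K`, and `{i_k : k ∈ K}` is a spreading of a subset of `F`, hence
lies in `S_α`. For an `S_β`-admissible `E₁ < ⋯ < E_j`, a block meeting exactly one `E_i` is
handled by the induction hypothesis applied to all the blocks meeting only `E_i`, while a block
meeting at least two of them contributes at most `2|a_k|` (as `‖x_k‖_{n+1} ≤ 1`), which is charged
to the singleton `{i_k}`. The sets `{i_k : x_k meets only E_i}` and these singletons form a
family whose minima are a twofold spreading of `{min E_i} ∈ S_β`, and every twofold spreading of a
member of `S_β` lies in `(S_β)²`.
-/

open Ordinal Filter Topology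

namespace LTIndex

/-- `E < F` for finite sets: `max E < min F` (with `max ∅ = 0`, `min ∅ = ∞`),
equivalently every element of `E` is less than every element of `F`. -/
def finLT (E F : Finset ℕ) : Prop := ∀ a ∈ E, ∀ b ∈ F, a < b

/-- `min E` (junk value `0` when `E = ∅`). -/
noncomputable def minOf (E : Finset ℕ) : ℕ := sInf (E : Set ℕ)

/-- `{E₁, …, E_n}` is `𝓕`-admissible: the `Eᵢ` are nonempty, `E₁ < ⋯ < E_n`
and `{min E₁, …, min E_n} ∈ 𝓕`. -/
def IsAdmissible (𝓕 : Set (Finset ℕ)) (l : List (Finset ℕ)) : Prop :=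
  (∀ E ∈ l, E.Nonempty) ∧ l.Chain' finLT ∧ (l.map minOf).toFinset ∈ 𝓕

/-- `𝓜[𝓝]`. -/
def famComp (M N : Set (Finset ℕ)) : Set (Finset ℕ) :=
  {F | ∃ l : List (Finset ℕ), IsAdmissible M l ∧ (∀ E ∈ l, E ∈ N) ∧
    F = l.foldr (· ∪ ·) ∅}

/-- `(𝓜, 𝓝) = {M ∪ N : M < N, M ∈ 𝓜, N ∈ 𝓝}`. -/
def pairFam (M N : Set (Finset ℕ)) : Set (Finset ℕ) :=
  {F | ∃ A ∈ M, ∃ B ∈ N, finLT A B ∧ F = A ∪ B}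

/-- `𝓜² = (𝓜, 𝓜)`. -/
def sqFam (M : Set (Finset ℕ)) : Set (Finset ℕ) := pairFam M M

/-- `S₀ = {{n} : n ∈ ℕ} ∪ {∅}`. -/
def schreierZero : Set (Finset ℕ) := {F : Finset ℕ | F.card ≤ 1}

/-- `S₁ = {F : |F| ≤ min F}`. -/
noncomputable def schreierOne : Set (Finset ℕ) := {F : Finset ℕ | F.card ≤ minOf F}

/-- A ladder system: for every countable limit ordinal `o`, `seq o` is a strictly
increasing sequence of ordinals below `o` with supremum `o`. -/
def IsCtblLadder (seq : Ordinal.{0} → ℕ → Ordinal.{0}) : Prop :=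
  ∀ o : Ordinal, o.card ≤ Cardinal.aleph0 → (o ≠ 0 ∧ ∀ a < o, Order.succ a < o) →
    StrictMono (seq o) ∧ (∀ n : ℕ, seq o n < o) ∧ (⨆ n : ℕ, seq o n) = o

/-- The Schreier classes `S_α`, relative to a choice `seq` of ladders at limit
ordinals: `S₀` is the singletons together with `∅`, `S_{α+1} = S₁[S_α]`, and at a
limit `α` (with ladder `(α_n) = seq α`), `S_α = {F : F ∈ S_{α_n} for some n ≤ |F|}`. -/
noncomputable def schreier (seq : Ordinal.{0} → ℕ → Ordinal.{0}) (o : Ordinal.{0}) :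
    Set (Finset ℕ) :=
  Ordinal.limitRecOn (motive := fun _ => Set (Finset ℕ)) o schreierZero
    (fun _ S => famComp schreierOne S)
    (fun o _ ih => {F | ∃ n : ℕ, n ≤ F.card ∧ ∃ h : seq o n < o, F ∈ ih (seq o n) h})

/-- `σ_F(x) = ∑_{n ∈ F} |x n|`. -/
noncomputable def sigmaF (F : Finset ℕ) (x : ℕ →₀ ℝ) : ℝ := ∑ n ∈ F, |x n|

/-- `‖x‖_𝓕 = sup_{F ∈ 𝓕} σ_F(x)`. -/
noncomputable def famNorm (𝓕 : Set (Finset ℕ)) (x : ℕ →₀ ℝ) : ℝ :=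
  sSup {r : ℝ | ∃ F ∈ 𝓕, r = sigmaF F x}

/-- `E x`: the coordinate restriction of `x` to `E`. -/
noncomputable def restr (E : Finset ℕ) (x : ℕ →₀ ℝ) : ℕ →₀ ℝ :=
  Finsupp.filter (· ∈ E) x

/-- The norms `‖·‖_n` (when `Sadm = S_β`), resp. `‖·‖′_n` (when `Sadm = (S_β)²`):
`‖·‖₀ = ‖·‖_{S_α}` and
`‖x‖_{n+1} = max{‖x‖_n, sup{(1/2)∑ᵢ ‖Eᵢx‖_n : {E₁,…,E_j} Sadm-admissible}}`. -/
noncomputable def normSeq (Sa Sadm : Set (Finset ℕ)) : ℕ → (ℕ →₀ ℝ) → ℝ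
  | 0, x => famNorm Sa x
  | n + 1, x =>
      max (normSeq Sa Sadm n x)
        (sSup {r : ℝ | ∃ l : List (Finset ℕ), IsAdmissible Sadm l ∧
          r = (1 / 2) * ((l.map fun E => normSeq Sa Sadm n (restr E x)).sum)})

/-- `‖x‖_{T̃}` (resp. `‖x‖_{T̈}`): the limit (= supremum, the sequence being
nondecreasing) of the norms `‖x‖_n` (resp. `‖x‖′_n`). -/
noncomputable def tnorm (Sa Sadm : Set (Finset ℕ)) (x : ℕ →₀ ℝ) : ℝ :=
  ⨆ n : ℕ, normSeq Sa Sadm n x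

/-- The families `𝓕_n` (with `Sadm = S_β`), resp. `𝓕′_n` (with `Sadm = (S_β)²`):
`𝓕₀ = S_α`, `𝓕_{n+1} = Sadm[𝓕_n]`. -/
def famF (Sa Sadm : Set (Finset ℕ)) : ℕ → Set (Finset ℕ)
  | 0 => Sa
  | n + 1 => famComp Sadm (famF Sa Sadm n)

/-- The families `𝓖_n` (with `Sadm = S_β`), resp. `𝓖′_n` (with `Sadm = (S_β)²`),
reindexed: `famG Sadm n = 𝓖_{n+1}`, i.e. `famG Sadm 0 = 𝓖₁ = Sadm` and
`𝓖_{n+2} = Sadm[𝓖_{n+1}]`. -/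
def famG (Sadm : Set (Finset ℕ)) : ℕ → Set (Finset ℕ)
  | 0 => Sadm
  | n + 1 => famComp Sadm (famG Sadm n)

/-- Hereditary family. -/
def Hereditary (𝓕 : Set (Finset ℕ)) : Prop := ∀ A ∈ 𝓕, ∀ B ⊆ A, B ∈ 𝓕

/-- Spreading family. -/
def Spreading (𝓕 : Set (Finset ℕ)) : Prop :=
  ∀ A ∈ 𝓕, ∀ g : ℕ → ℕ, StrictMonoOn g (A : Set ℕ) → (∀ a ∈ A, a ≤ g a) →
    A.image g ∈ 𝓕

/-- Compactness of a family of finite sets, viewed inside `2^ℕ` (ℕ → Bool with the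
product topology) via characteristic functions. -/
def CompactFam (𝓕 : Set (Finset ℕ)) : Prop :=
  IsCompact ((fun A : Finset ℕ => fun n : ℕ => decide (n ∈ A)) '' 𝓕)

/-- Regular family: hereditary, spreading and compact. -/
def RegularFam (𝓕 : Set (Finset ℕ)) : Prop :=
  Hereditary 𝓕 ∧ Spreading 𝓕 ∧ CompactFam 𝓕

/-- The Cantor–Bendixson derivative of a family of finite subsets of ℕ: the set of
its limit points in the product topology of `2^ℕ` (a basic neighbourhood of `A` is
determined by an agreement of initial segments). -/
def famDeriv (𝓕 : Set (Finset ℕ)) : Set (Finset ℕ) :=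
  {A | ∀ m : ℕ, ∃ B ∈ 𝓕, B ≠ A ∧ B.filter (· ≤ m) = A.filter (· ≤ m)}

/-- Iterated Cantor–Bendixson derivatives `𝓕^{(o)}`. -/
noncomputable def famDerivIter (𝓕 : Set (Finset ℕ)) (o : Ordinal.{0}) : Set (Finset ℕ) :=
  Ordinal.limitRecOn (motive := fun _ => Set (Finset ℕ)) o 𝓕
    (fun _ S => famDeriv S)
    (fun o _ ih => ⋂ (o' : Ordinal) (h : o' < o), ih o' h)

/-- One step of the standard representation: `A` is obtained from the remainder `R`
as `R ∩ [1, k]` where `k` is the largest element of `F` with `R ∩ [1, k] ∈ 𝓝`. -/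
def stepOf (N : Set (Finset ℕ)) (F R A : Finset ℕ) : Prop :=
  ∃ k ∈ F, A = R.filter (· ≤ k) ∧ A ∈ N ∧
    ∀ k' ∈ F, R.filter (· ≤ k') ∈ N → k' ≤ k

/-- `IsStdRepFrom N F R L`: starting from remainder `R`, the list `L` is produced by
the greedy recursion defining the standard representation, exhausting `R`. -/
def IsStdRepFrom (N : Set (Finset ℕ)) (F : Finset ℕ) : Finset ℕ → List (Finset ℕ) → Prop
  | R, [] => R = ∅
  | R, A :: L => stepOf N F R A ∧ IsStdRepFrom N F (R \ A) L

/-- `L` is the standard representation of `F` (as an element of `𝓜[𝓝]`). -/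
def IsStdRep (N : Set (Finset ℕ)) (F : Finset ℕ) (L : List (Finset ℕ)) : Prop :=
  IsStdRepFrom N F F L

section Trees

variable {X : Type*}

/-- A tree on `X`: a set of nonempty finite sequences closed under nonempty initial
segments. -/
def IsTree (T : Set (List X)) : Prop :=
  ∀ l ∈ T, l ≠ [] ∧ ∀ m : ℕ, 0 < m → m < l.length → l.take m ∈ T

/-- A tree is well-founded if it has no infinite branch. -/
def WellFoundedTree (T : Set (List X)) : Prop :=
  ¬ ∃ f : ℕ → X, ∀ n : ℕ, (List.ofFn fun i : Fin (n + 1) => f i) ∈ T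

/-- The derived tree `D(T)`. -/
def treeDeriv (T : Set (List X)) : Set (List X) :=
  {l | l ∈ T ∧ ∃ x : X, l ++ [x] ∈ T}

/-- Iterated derived trees `D^o(T)`. -/
noncomputable def treeDerivIter (T : Set (List X)) (o : Ordinal.{0}) : Set (List X) :=
  Ordinal.limitRecOn (motive := fun _ => Set (List X)) o T
    (fun _ S => treeDeriv S)
    (fun o _ ih => ⋂ (o' : Ordinal) (h : o' < o), ih o' h)

/-- The order `o(T)` of a (well-founded) tree. -/
noncomputable def treeOrder (T : Set (List X)) : Ordinal.{0} :=
  sInf {o : Ordinal | treeDerivIter T o = ∅}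

end Trees

section Banach

variable (X : Type) [NormedAddCommGroup X] [NormedSpace ℝ X]

/-- `cs` witnesses that the node `l` is a finite block basis of `(e_i)`: each entry
of `l` is the (finite, nonzero) linear combination of the `e_i` given by the
corresponding entry of `cs`, and the supports are successive. -/
def IsBlockNode (e : ℕ → X) (l : List X) (cs : List (ℕ →₀ ℝ)) : Prop :=
  cs.length = l.length ∧
  (∀ (i : ℕ) (h : i < cs.length) (h' : i < l.length),
    l.get ⟨i, h'⟩ = (cs.get ⟨i, h⟩).sum fun n r => r • e n) ∧
  (∀ c ∈ cs, c ≠ 0) ∧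
  cs.Chain' fun c d => finLT c.support d.support

/-- `e` is a (Schauder) basis of `X`. -/
def IsSchauderBasis (e : ℕ → X) : Prop :=
  ∀ x : X, ∃! a : ℕ → ℝ,
    Tendsto (fun n => ∑ i ∈ Finset.range n, a i • e i) atTop (𝓝 x)

/-- An `ℓ¹`-`K` tree on `X`: a tree on the unit sphere of `X` such that every node
`(x₁, …, x_n)` satisfies `‖∑ aᵢ xᵢ‖ ≥ K⁻¹ ∑ |aᵢ|`. -/
def IsL1Tree (K : ℝ) (T : Set (List X)) : Prop :=
  IsTree T ∧ ∀ l ∈ T, (∀ x ∈ l, ‖x‖ = 1) ∧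
    ∀ a : Fin l.length → ℝ, K⁻¹ * ∑ i, |a i| ≤ ‖∑ i : Fin l.length, a i • l.get i‖

/-- `I(X, K)`: the supremum of the orders of well-founded `ℓ¹`-`K` trees on `X`. -/
noncomputable def bourgainIndexK (K : ℝ) : Ordinal.{0} :=
  ⨆ T : {T : Set (List X) // IsL1Tree X K T ∧ WellFoundedTree T}, treeOrder T.1

/-- The Bourgain `ℓ¹`-index `I(X) = sup_{1 ≤ K < ∞} I(X, K)`. -/
noncomputable def bourgainIndex : Ordinal.{0} :=
  ⨆ K : {K : ℝ // 1 ≤ K}, bourgainIndexK X K.1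

/-- `I_b(X, K)` relative to the basis `e`: the supremum of the orders of
well-founded `ℓ¹`-`K` block trees on `X`. -/
noncomputable def blockIndexK (e : ℕ → X) (K : ℝ) : Ordinal.{0} :=
  ⨆ T : {T : Set (List X) //
      IsL1Tree X K T ∧ (∀ l ∈ T, ∃ cs, IsBlockNode X e l cs) ∧ WellFoundedTree T},
    treeOrder T.1

/-- The block `ℓ¹`-index `I_b(X) = sup_{1 ≤ K < ∞} I_b(X, K)`. -/
noncomputable def blockIndex (e : ℕ → X) : Ordinal.{0} :=
  ⨆ K : {K : ℝ // 1 ≤ K}, blockIndexK X e K.1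

end Banach

open Finset

/-! ### Admissible families -/

lemma minOf_mem {E : Finset ℕ} (h : E.Nonempty) : minOf E ∈ E :=
  Nat.sInf_mem (s := (E : Set ℕ)) h

lemma minOf_le {E : Finset ℕ} {a : ℕ} (h : a ∈ E) : minOf E ≤ a :=
  Nat.sInf_le h

lemma minOf_singleton (a : ℕ) : minOf {a} = a := by
  simp [minOf]

namespace finLT

variable {E F : Finset ℕ}

lemma disjoint (h : finLT E F) : Disjoint E F :=
  Finset.disjoint_left.mpr fun a ha ha' => lt_irrefl a (h a ha a ha')

lemma minOf_lt (hE : E.Nonempty) (hF : F.Nonempty) (h : finLT E F) : minOf E < minOf F :=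
  h _ (minOf_mem hE) _ (minOf_mem hF)

lemma trans {G : Finset ℕ} (hF : F.Nonempty) (h : finLT E F) (h' : finLT F G) : finLT E G := by
  obtain ⟨c, hc⟩ := hF
  exact fun a ha b hb => (h a ha c hc).trans (h' c hc b hb)

end finLT

lemma pairwise_finLT_of_isChain {l : List (Finset ℕ)} (hne : ∀ E ∈ l, E.Nonempty)
    (hl : l.IsChain finLT) : l.Pairwise finLT := by
  induction l with
  | nil => exact .nil
  | cons E l ih =>
    have hp := ih (fun F hF => hne F (List.mem_cons_of_mem _ hF)) hl.tail
    refine .cons (fun G hG => ?_) hp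
    cases l with
    | nil => cases hG
    | cons F l =>
      have hEF : finLT E F := (List.isChain_cons_cons.mp hl).1
      rcases List.mem_cons.mp hG with rfl | hG
      · exact hEF
      · exact hEF.trans (hne F (by simp)) ((List.pairwise_cons.mp hp).1 G hG)

lemma foldr_union_eq_sup_id (l : List (Finset ℕ)) :
    l.foldr (· ∪ ·) ∅ = l.toFinset.sup id := by
  induction l with
  | nil => rfl
  | cons E l ih => simp [ih]

def IsSeparated (𝓓 : Finset (Finset ℕ)) : Prop :=
  (𝓓 : Set (Finset ℕ)).Pairwise fun D E => finLT D E ∨ finLT E D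

namespace IsSeparated

variable {𝓓 : Finset (Finset ℕ)}

lemma pairwiseDisjoint (h : IsSeparated 𝓓) : (𝓓 : Set (Finset ℕ)).PairwiseDisjoint id :=
  fun _ hD _ hE hDE => (h hD hE hDE).elim finLT.disjoint fun h => h.disjoint.symm

lemma subset {𝓔 : Finset (Finset ℕ)} (h : IsSeparated 𝓓) (hsub : 𝓔 ⊆ 𝓓) : IsSeparated 𝓔 :=
  Set.Pairwise.mono (by simpa using hsub) h

lemma finLT_of_minOf_lt (h : IsSeparated 𝓓) {D E : Finset ℕ} (hD : D ∈ 𝓓) (hE : E ∈ 𝓓)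
    (hDne : D.Nonempty) (hEne : E.Nonempty) (hlt : minOf D < minOf E) : finLT D E := by
  rcases h hD hE (by rintro rfl; exact lt_irrefl _ hlt) with h | h
  · exact h
  · exact absurd (h.minOf_lt hEne hDne) hlt.not_gt

lemma injOn_minOf (h : IsSeparated 𝓓) (hne : ∀ D ∈ 𝓓, D.Nonempty) :
    Set.InjOn minOf (𝓓 : Set (Finset ℕ)) := by
  intro D hD E hE hDE
  by_contra hne'
  rcases h hD hE hne' with h | h
  · exact (h.minOf_lt (hne D hD) (hne E hE)).ne hDE
  · exact (h.minOf_lt (hne E hE) (hne D hD)).ne hDE.symm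

lemma exists_list (h : IsSeparated 𝓓) (hne : ∀ D ∈ 𝓓, D.Nonempty) :
    ∃ l : List (Finset ℕ), l.Pairwise finLT ∧ l.toFinset = 𝓓 := by
  classical
  induction 𝓓 using Finset.induction_on_max_value minOf with
  | empty => exact ⟨[], .nil, rfl⟩
  | insert D 𝓓 hD hmax ih =>
    have h' : IsSeparated 𝓓 := h.subset (subset_insert D 𝓓)
    obtain ⟨l, hl, rfl⟩ := ih h' fun E hE => hne E (mem_insert_of_mem hE)
    refine ⟨l ++ [D], List.pairwise_append.mpr ⟨hl, by simp, fun E hE D' hD' => ?_⟩, by simp⟩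
    rw [List.mem_singleton.mp hD']
    have hE' : E ∈ insert D l.toFinset := mem_insert_of_mem (List.mem_toFinset.mpr hE)
    have hED : E ≠ D := fun h => hD (h ▸ List.mem_toFinset.mpr hE)
    rcases h hE' (mem_insert_self _ _) hED with h | h
    · exact h
    · exact absurd (hmax E (List.mem_toFinset.mpr hE))
        (h.minOf_lt (hne _ (mem_insert_self _ _)) (hne E hE')).not_ge

end IsSeparated

def IsAdmissibleFamily (𝓕 : Set (Finset ℕ)) (𝓓 : Finset (Finset ℕ)) : Prop :=
  (∀ D ∈ 𝓓, D.Nonempty) ∧ IsSeparated 𝓓 ∧ 𝓓.image minOf ∈ 𝓕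

lemma IsAdmissible.pairwise {𝓕 : Set (Finset ℕ)} {l : List (Finset ℕ)}
    (h : IsAdmissible 𝓕 l) : l.Pairwise finLT :=
  pairwise_finLT_of_isChain h.1 h.2.1

lemma IsAdmissible.nodup {𝓕 : Set (Finset ℕ)} {l : List (Finset ℕ)}
    (h : IsAdmissible 𝓕 l) : l.Nodup :=
  h.pairwise.imp_of_mem fun hD _ hlt hDE => by
    subst hDE
    obtain ⟨a, ha⟩ := h.1 _ hD
    exact lt_irrefl a (hlt a ha a ha)

lemma IsAdmissible.toFinset {𝓕 : Set (Finset ℕ)} {l : List (Finset ℕ)}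
    (h : IsAdmissible 𝓕 l) : IsAdmissibleFamily 𝓕 l.toFinset := by
  classical
  refine ⟨fun D hD => h.1 D (List.mem_toFinset.mp hD), fun D hD E hE hDE => ?_, ?_⟩
  · have hsep := List.Pairwise.forall_of_forall_of_flip
      (R := fun D E => D ≠ E → finLT D E ∨ finLT E D) (fun _ _ h => absurd rfl h)
      (h.pairwise.imp fun h _ => .inl h) (h.pairwise.imp fun h _ => .inr h)
    exact hsep (List.mem_toFinset.mp hD) (List.mem_toFinset.mp hE) hDE
  · convert h.2.2 using 1
    ext; simp

lemma IsAdmissibleFamily.exists_isAdmissible {𝓕 : Set (Finset ℕ)} {𝓓 : Finset (Finset ℕ)}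
    (h : IsAdmissibleFamily 𝓕 𝓓) : ∃ l, IsAdmissible 𝓕 l ∧ l.toFinset = 𝓓 := by
  classical
  obtain ⟨l, hl, rfl⟩ := h.2.1.exists_list h.1
  refine ⟨l, ⟨fun D hD => h.1 D (List.mem_toFinset.mpr hD), hl.isChain, ?_⟩, rfl⟩
  convert h.2.2 using 1
  ext; simp

lemma mem_famComp_iff {M N : Set (Finset ℕ)} {F : Finset ℕ} :
    F ∈ famComp M N ↔
      ∃ 𝓓 : Finset (Finset ℕ), IsAdmissibleFamily M 𝓓 ∧ (∀ D ∈ 𝓓, D ∈ N) ∧ F = 𝓓.sup id := by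
  classical
  constructor
  · rintro ⟨l, hl, hN, rfl⟩
    exact ⟨l.toFinset, hl.toFinset, fun D hD => hN D (List.mem_toFinset.mp hD),
      foldr_union_eq_sup_id l⟩
  · rintro ⟨𝓓, h𝓓, hN, rfl⟩
    obtain ⟨l, hl, rfl⟩ := h𝓓.exists_isAdmissible
    exact ⟨l, hl, fun D hD => hN D (List.mem_toFinset.mpr hD), (foldr_union_eq_sup_id l).symm⟩

/-! ### Spreading -/

lemma empty_mem_schreierOne : (∅ : Finset ℕ) ∈ schreierOne := by
  simp [schreierOne]

lemma IsAdmissibleFamily.empty (𝓕 : Set (Finset ℕ)) (h : ∅ ∈ 𝓕) : IsAdmissibleFamily 𝓕 ∅ :=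
  ⟨by simp, by simp [IsSeparated], by simpa using h⟩

lemma zero_notMem_of_mem_schreierOne {F : Finset ℕ} (hF : F ∈ schreierOne) (hne : F.Nonempty) :
    0 ∉ F := fun h0 =>
  hne.ne_empty (Finset.card_eq_zero.mp (Nat.le_zero.mp (hF.trans (minOf_le h0))))

/-- `ψ` exhibits `V` as an `r`-fold spreading of a subset of `M`. -/
def Spreads (r : ℕ) (ψ : ℕ → ℕ) (M V : Finset ℕ) : Prop :=
  (∀ v ∈ V, ψ v ∈ M) ∧ (∀ v ∈ V, ψ v ≤ v) ∧ MonotoneOn ψ V ∧ ∀ μ, #{v ∈ V | ψ v = μ} ≤ r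

namespace Spreads

variable {r : ℕ} {ψ : ℕ → ℕ} {M V : Finset ℕ}

lemma card_le (h : Spreads r ψ M V) : #V ≤ r * #M :=
  card_le_mul_card_image_of_maps_to h.1 r fun μ _ => h.2.2.2 μ

lemma restrict (h : Spreads r ψ M V) (N : Finset ℕ) : Spreads r ψ N {v ∈ V | ψ v ∈ N} := by
  refine ⟨fun v hv => (mem_filter.mp hv).2, fun v hv => h.2.1 v (mem_filter.mp hv).1,
    h.2.2.1.mono fun _ hv => (mem_filter.mp hv).1,
    fun μ => (card_le_card fun v => ?_).trans (h.2.2.2 μ)⟩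
  simp only [mem_filter]
  exact fun hv => ⟨hv.1.1, hv.2⟩

lemma zero_mem (h : Spreads r ψ M V) (h0 : 0 ∈ V) : 0 ∈ M :=
  Nat.le_zero.mp (h.2.1 0 h0) ▸ h.1 0 h0

lemma card_le_of_mem (h : Spreads r ψ M V) (hM : M ∈ schreierOne) {v : ℕ} (hv : v ∈ V) :
    #M ≤ v :=
  (hM.trans (minOf_le (h.1 v hv))).trans (h.2.1 v hv)

end Spreads

lemma spreads_one_of_strictMonoOn {ψ : ℕ → ℕ} {M V : Finset ℕ} (hmaps : ∀ v ∈ V, ψ v ∈ M)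
    (hle : ∀ v ∈ V, ψ v ≤ v) (hψ : StrictMonoOn ψ V) : Spreads 1 ψ M V :=
  ⟨hmaps, hle, hψ.monotoneOn, fun _ => card_le_one.mpr fun _ hv _ hw =>
    hψ.injOn (mem_filter.mp hv).1 (mem_filter.mp hw).1
      ((mem_filter.mp hv).2.trans (mem_filter.mp hw).2.symm)⟩

lemma mem_schreierOne_of_le {X : Finset ℕ} {m : ℕ} (hcard : #X ≤ m) (hle : ∀ v ∈ X, m ≤ v) :
    X ∈ schreierOne := by
  rcases X.eq_empty_or_nonempty with rfl | hne
  · exact empty_mem_schreierOne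
  · exact hcard.trans (hle _ (minOf_mem hne))

lemma Spreads.mem_schreierOne {ψ : ℕ → ℕ} {M V : Finset ℕ} (h : Spreads 1 ψ M V)
    (hM : M ∈ schreierOne) : V ∈ schreierOne :=
  mem_schreierOne_of_le (by simpa using h.card_le) fun _ => h.card_le_of_mem hM

lemma exists_card_filter_lt_eq (V : Finset ℕ) {m : ℕ} (hm : m ≤ #V) :
    ∃ θ, #{v ∈ V | v < θ} = m := by
  induction V using Finset.induction_on_max generalizing m with
  | empty => exact ⟨0, by simpa using (Nat.le_zero.mp (by simpa using hm)).symm⟩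
  | insert a V hlt ih =>
    have ha : a ∉ V := fun h => lt_irrefl a (hlt a h)
    rw [card_insert_of_notMem ha] at hm
    rcases hm.lt_or_eq with hm | rfl
    · obtain ⟨θ, hθ⟩ := ih (Nat.lt_succ_iff.mp hm)
      refine ⟨min θ a, ?_⟩
      rw [filter_insert, if_neg (by simp), ← hθ]
      congr 1
      exact filter_congr fun v hv => by simp [hlt v hv]
    · refine ⟨a + 1, ?_⟩
      rw [filter_true_of_mem fun v hv => ?_, card_insert_of_notMem ha]
      rcases mem_insert.mp hv with rfl | hv
      · exact Nat.lt_succ_self v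
      · exact (hlt v hv).trans (Nat.lt_succ_self a)

lemma exists_split_card_le {V : Finset ℕ} {m : ℕ} (h : #V ≤ 2 * m) :
    ∃ θ, #{v ∈ V | v < θ} ≤ m ∧ #{v ∈ V | θ ≤ v} ≤ m := by
  rcases le_total #V m with hV | hV
  · exact ⟨0, by simp, (card_filter_le _ _).trans hV⟩
  · obtain ⟨θ, hθ⟩ := exists_card_filter_lt_eq V hV
    have := card_filter_add_card_filter_not (s := V) (p := (· < θ))
    simp only [not_lt] at this
    exact ⟨θ, hθ.le, by omega⟩

lemma mem_sqFam_of_split {𝓕 : Set (Finset ℕ)} {V : Finset ℕ} {θ : ℕ}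
    (hlow : {v ∈ V | v < θ} ∈ 𝓕) (hhigh : {v ∈ V | θ ≤ v} ∈ 𝓕) : V ∈ sqFam 𝓕 := by
  refine ⟨_, hlow, _, hhigh, fun a ha b hb => ?_, ?_⟩
  · exact (mem_filter.mp ha).2.trans_le (mem_filter.mp hb).2
  · ext v
    simp only [mem_union, mem_filter]
    constructor
    · intro hv
      exact (lt_or_ge v θ).imp (⟨hv, ·⟩) (⟨hv, ·⟩)
    · rintro (h | h) <;> exact h.1

lemma Spreads.exists_split_schreierOne {ψ : ℕ → ℕ} {M V : Finset ℕ} (h : Spreads 2 ψ M V)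
    (hM : M ∈ schreierOne) :
    ∃ θ, {v ∈ V | v < θ} ∈ schreierOne ∧ {v ∈ V | θ ≤ v} ∈ schreierOne := by
  obtain ⟨θ, hlow, hhigh⟩ := exists_split_card_le h.card_le
  exact ⟨θ, mem_schreierOne_of_le hlow fun v hv => h.card_le_of_mem hM (mem_filter.mp hv).1,
    mem_schreierOne_of_le hhigh fun v hv => h.card_le_of_mem hM (mem_filter.mp hv).1⟩

def floorIn (N : Finset ℕ) (a : ℕ) : ℕ := {b ∈ N | b ≤ a}.sup id

lemma floorIn_le (N : Finset ℕ) (a : ℕ) : floorIn N a ≤ a :=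
  Finset.sup_le fun _ hb => (mem_filter.mp hb).2

lemma floorIn_mono (N : Finset ℕ) : Monotone (floorIn N) := fun _ _ hab =>
  Finset.sup_mono fun _ hc => by
    simp only [mem_filter] at hc ⊢
    exact ⟨hc.1, hc.2.trans hab⟩

section MapsTo

variable {𝓜 𝓒 : Finset (Finset ℕ)} {ψ : ℕ → ℕ} {V : Finset ℕ}

lemma IsSeparated.floorIn_eq_minOf (h𝓜 : IsSeparated 𝓜) (hne : ∀ E ∈ 𝓜, E.Nonempty)
    {E : Finset ℕ} (hE : E ∈ 𝓜) {a : ℕ} (ha : a ∈ E) : floorIn (𝓜.image minOf) a = minOf E := by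
  refine le_antisymm (Finset.sup_le fun b hb => ?_)
    (le_sup (f := id) (mem_filter.mpr ⟨mem_image_of_mem _ hE, minOf_le ha⟩))
  obtain ⟨hb, hba⟩ := mem_filter.mp hb
  obtain ⟨F, hF, rfl⟩ := mem_image.mp hb
  by_cases hFE : F = E
  · rw [hFE]; rfl
  rcases h𝓜 hF hE hFE with h | h
  · exact (h.minOf_lt (hne F hF) (hne E hE)).le
  · exact absurd hba (h a ha _ (minOf_mem (hne F hF))).not_ge

lemma finLT_of_mapsTo (hψ : MonotoneOn ψ V) {P Q E F : Finset ℕ} (hP : P ⊆ V) (hQ : Q ⊆ V)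
    (hPE : ∀ v ∈ P, ψ v ∈ E) (hQF : ∀ v ∈ Q, ψ v ∈ F) (hEF : finLT E F) : finLT P Q :=
  fun _ hp _ hq => lt_of_not_ge fun hqp =>
    (hEF _ (hPE _ hp) _ (hQF _ hq)).not_ge (hψ (hQ hq) (hP hp) hqp)

lemma IsSeparated.of_mapsTo (h𝓜 : IsSeparated 𝓜) (hψ : MonotoneOn ψ V)
    (hV : ∀ P ∈ 𝓒, P ⊆ V) (hmaps : ∀ P ∈ 𝓒, ∃ E ∈ 𝓜, ∀ v ∈ P, ψ v ∈ E)
    (hsame : ∀ E ∈ 𝓜, ∃ 𝓠 : Finset (Finset ℕ), IsSeparated 𝓠 ∧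
      ∀ P ∈ 𝓒, (∀ v ∈ P, ψ v ∈ E) → P ∈ 𝓠) :
    IsSeparated 𝓒 := by
  intro P hP Q hQ hPQ
  obtain ⟨E, hE, hPE⟩ := hmaps P hP
  obtain ⟨F, hF, hQF⟩ := hmaps Q hQ
  by_cases hEF : E = F
  · subst hEF
    obtain ⟨𝓠, h𝓠, hmem⟩ := hsame E hE
    exact h𝓠 (hmem P hP hPE) (hmem Q hQ hQF) hPQ
  · exact (h𝓜 hE hF hEF).imp (finLT_of_mapsTo hψ (hV P hP) (hV Q hQ) hPE hQF)
      (finLT_of_mapsTo hψ (hV Q hQ) (hV P hP) hQF hPE)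

lemma spreads_image_minOf {s : ℕ} (h𝓜ne : ∀ E ∈ 𝓜, E.Nonempty) (h𝓜 : IsSeparated 𝓜)
    (hle : ∀ v ∈ V, ψ v ≤ v) (hψ : MonotoneOn ψ V) (hne : ∀ P ∈ 𝓒, P.Nonempty)
    (hV : ∀ P ∈ 𝓒, P ⊆ V) (hmaps : ∀ P ∈ 𝓒, ∃ E ∈ 𝓜, ∀ v ∈ P, ψ v ∈ E)
    (hcount : ∀ E ∈ 𝓜, ∃ 𝓠 : Finset (Finset ℕ), #𝓠 ≤ s ∧
      ∀ P ∈ 𝓒, (∀ v ∈ P, ψ v ∈ E) → P ∈ 𝓠) :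
    Spreads s (floorIn (𝓜.image minOf) ∘ ψ) (𝓜.image minOf) (𝓒.image minOf) := by
  have hfloor : ∀ P ∈ 𝓒, ∀ E ∈ 𝓜, (∀ v ∈ P, ψ v ∈ E) →
      floorIn (𝓜.image minOf) (ψ (minOf P)) = minOf E := fun P hP E hE hPE =>
    h𝓜.floorIn_eq_minOf h𝓜ne hE (hPE _ (minOf_mem (hne P hP)))
  have hWV : ∀ w ∈ 𝓒.image minOf, w ∈ V := by
    simp only [mem_image, forall_exists_index, and_imp]
    rintro _ P hP rfl
    exact hV P hP (minOf_mem (hne P hP))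
  refine ⟨?_, fun w hw => (floorIn_le _ _).trans (hle w (hWV w hw)),
    (floorIn_mono _).comp_monotoneOn (hψ.mono fun w hw => hWV w hw), fun μ => ?_⟩
  · simp only [mem_image, forall_exists_index, and_imp]
    rintro _ P hP rfl
    obtain ⟨E, hE, hPE⟩ := hmaps P hP
    exact ⟨E, hE, (hfloor P hP E hE hPE).symm⟩
  by_cases hμ : ∃ E ∈ 𝓜, minOf E = μ
  · obtain ⟨E, hE, rfl⟩ := hμ
    obtain ⟨𝓠, h𝓠, hmem⟩ := hcount E hE
    refine (card_le_card fun w hw => ?_).trans ((card_image_le (f := minOf)).trans h𝓠)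
    obtain ⟨hw, hwμ⟩ := mem_filter.mp hw
    obtain ⟨P, hP, rfl⟩ := mem_image.mp hw
    obtain ⟨F, hF, hPF⟩ := hmaps P hP
    have hFE : F = E :=
      h𝓜.injOn_minOf h𝓜ne hF hE ((hfloor P hP F hF hPF).symm.trans hwμ)
    exact mem_image_of_mem _ (hmem P hP (hFE ▸ hPF))
  · refine (Finset.card_eq_zero.mpr (filter_eq_empty_iff.mpr fun w hw hwμ => hμ ?_)).le.trans
      (Nat.zero_le s)
    obtain ⟨P, hP, rfl⟩ := mem_image.mp hw
    obtain ⟨F, hF, hPF⟩ := hmaps P hP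
    exact ⟨F, hF, (hfloor P hP F hF hPF).symm.trans hwμ⟩

end MapsTo

lemma IsSeparated.eq_of_mem {𝓜 : Finset (Finset ℕ)} (h𝓜 : IsSeparated 𝓜) {E F : Finset ℕ}
    (hE : E ∈ 𝓜) (hF : F ∈ 𝓜) {a : ℕ} (haE : a ∈ E) (haF : a ∈ F) : E = F :=
  by_contra fun hEF => Finset.disjoint_left.mp (h𝓜.pairwiseDisjoint hE hF hEF) haE haF

lemma sup_id_eq_of_cover {𝓒 : Finset (Finset ℕ)} {V : Finset ℕ} (hsub : ∀ P ∈ 𝓒, P ⊆ V)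
    (hcover : ∀ v ∈ V, ∃ P ∈ 𝓒, v ∈ P) : 𝓒.sup id = V :=
  le_antisymm (Finset.sup_le hsub) fun v hv => mem_sup.mpr (hcover v hv)

lemma IsSeparated.pair {A B : Finset ℕ} (h : finLT A B) : IsSeparated {A, B} := by
  intro P hP Q hQ hPQ
  simp only [coe_insert, coe_singleton, Set.mem_insert_iff, Set.mem_singleton_iff] at hP hQ
  rcases hP with rfl | rfl <;> rcases hQ with rfl | rfl
  · exact absurd rfl hPQ
  · exact .inl h
  · exact .inr h
  · exact absurd rfl hPQ

lemma Spreads.refine {r s : ℕ} {𝓜 : Finset (Finset ℕ)} {ψ : ℕ → ℕ} {V : Finset ℕ}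
    (h : Spreads r ψ (𝓜.sup id) V) (h𝓜ne : ∀ E ∈ 𝓜, E.Nonempty) (h𝓜 : IsSeparated 𝓜)
    (𝓠 : Finset ℕ → Finset (Finset ℕ)) (hsep : ∀ E ∈ 𝓜, IsSeparated (𝓠 E))
    (hcard : ∀ E ∈ 𝓜, #(𝓠 E) ≤ s) (hcover : ∀ E ∈ 𝓜, (𝓠 E).sup id = {v ∈ V | ψ v ∈ E}) :
    IsSeparated {P ∈ 𝓜.biUnion 𝓠 | P.Nonempty} ∧ {P ∈ 𝓜.biUnion 𝓠 | P.Nonempty}.sup id = V ∧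
      Spreads s (floorIn (𝓜.image minOf) ∘ ψ) (𝓜.image minOf)
        ({P ∈ 𝓜.biUnion 𝓠 | P.Nonempty}.image minOf) := by
  set 𝓒 := {P ∈ 𝓜.biUnion 𝓠 | P.Nonempty}
  have hmem : ∀ P ∈ 𝓒, P.Nonempty ∧ ∃ E ∈ 𝓜, P ∈ 𝓠 E := fun P hP =>
    ⟨(mem_filter.mp hP).2, mem_biUnion.mp (mem_filter.mp hP).1⟩
  have hpart : ∀ E ∈ 𝓜, ∀ P ∈ 𝓠 E, ∀ v ∈ P, v ∈ V ∧ ψ v ∈ E := fun E hE P hP v hv =>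
    mem_filter.mp (hcover E hE ▸ mem_sup.mpr ⟨P, hP, hv⟩)
  have hV : ∀ P ∈ 𝓒, P ⊆ V := fun P hP v hv => by
    obtain ⟨-, E, hE, hPE⟩ := hmem P hP
    exact (hpart E hE P hPE v hv).1
  have hmaps : ∀ P ∈ 𝓒, ∃ E ∈ 𝓜, ∀ v ∈ P, ψ v ∈ E := fun P hP => by
    obtain ⟨-, E, hE, hPE⟩ := hmem P hP
    exact ⟨E, hE, fun v hv => (hpart E hE P hPE v hv).2⟩
  have hunique : ∀ E ∈ 𝓜, ∀ P ∈ 𝓒, (∀ v ∈ P, ψ v ∈ E) → P ∈ 𝓠 E := fun E hE P hP hPE => by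
    obtain ⟨⟨v, hv⟩, F, hF, hPF⟩ := hmem P hP
    rwa [h𝓜.eq_of_mem hE hF (hPE v hv) (hpart F hF P hPF v hv).2]
  refine ⟨h𝓜.of_mapsTo h.2.2.1 hV hmaps fun E hE => ⟨𝓠 E, hsep E hE, hunique E hE⟩,
    sup_id_eq_of_cover hV fun v hv => ?_, spreads_image_minOf h𝓜ne h𝓜 h.2.1 h.2.2.1
      (fun P hP => (hmem P hP).1) hV hmaps fun E hE => ⟨𝓠 E, hcard E hE, hunique E hE⟩⟩
  obtain ⟨E, hE, hvE⟩ := mem_sup.mp (h.1 v hv)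
  obtain ⟨P, hP, hvP⟩ := mem_sup.mp ((hcover E hE).symm ▸ mem_filter.mpr ⟨hv, hvE⟩ :
    v ∈ (𝓠 E).sup id)
  exact ⟨P, mem_filter.mpr ⟨mem_biUnion.mpr ⟨E, hE, hP⟩, v, hvP⟩, hvP⟩

/-! ### Schreier families -/

lemma card_le_aleph0_of_le {o o' : Ordinal.{0}} (h : o' ≤ o)
    (ho : o.card ≤ Cardinal.aleph0) : o'.card ≤ Cardinal.aleph0 :=
  (Ordinal.card_le_card h).trans ho

namespace IsCtblLadder

variable {seq : Ordinal.{0} → ℕ → Ordinal.{0}} (hseq : IsCtblLadder seq) {o : Ordinal.{0}}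
  (ho : Order.IsSuccLimit o) (hoc : o.card ≤ Cardinal.aleph0)
include hseq ho hoc

lemma lt (n : ℕ) : seq o n < o :=
  (hseq o hoc ⟨ho.ne_bot, fun _ ha => ho.succ_lt ha⟩).2.1 n

lemma natCast_le (n : ℕ) : (n : Ordinal) ≤ seq o n := by
  have hmono := (hseq o hoc ⟨ho.ne_bot, fun _ ha => ho.succ_lt ha⟩).1
  induction n with
  | zero => simp
  | succ n ih =>
    rw [Nat.cast_succ]
    exact Order.add_one_le_of_lt (ih.trans_lt (hmono n.lt_succ_self))

end IsCtblLadder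

section Schreier

variable {seq : Ordinal.{0} → ℕ → Ordinal.{0}}

lemma schreier_zero : schreier seq 0 = schreierZero := by
  rw [schreier, Ordinal.limitRecOn_zero]

lemma mem_schreier_succ_iff {o : Ordinal.{0}} {F : Finset ℕ} :
    F ∈ schreier seq (o + 1) ↔ ∃ 𝓓 : Finset (Finset ℕ), IsAdmissibleFamily schreierOne 𝓓 ∧
      (∀ D ∈ 𝓓, D ∈ schreier seq o) ∧ F = 𝓓.sup id := by
  rw [schreier, Ordinal.limitRecOn_add_one, ← mem_famComp_iff]
  rfl

lemma mem_schreier_limit_iff {o : Ordinal.{0}} (ho : Order.IsSuccLimit o) {F : Finset ℕ} :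
    F ∈ schreier seq o ↔ ∃ n : ℕ, n ≤ F.card ∧ ∃ _ : seq o n < o, F ∈ schreier seq (seq o n) := by
  rw [schreier, Ordinal.limitRecOn_limit _ _ _ _ ho]
  rfl

-- `{0}` lies in `S₀` but no set containing `0` lies in `S₁`, since `|F| ≤ min F` there.
lemma eq_singleton_zero_of_mem_schreier {o : Ordinal.{0}} {F : Finset ℕ}
    (hF : F ∈ schreier seq o) (h0 : 0 ∈ F) : F = {0} := by
  induction o using Ordinal.limitRecOn generalizing F with
  | zero =>
    rw [schreier_zero] at hF
    exact eq_singleton_iff_unique_mem.mpr ⟨h0, fun a ha => Finset.card_le_one.mp hF a ha 0 h0⟩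
  | add_one o _ =>
    obtain ⟨𝓓, ⟨hne, -, hmins⟩, -, rfl⟩ := mem_schreier_succ_iff.mp hF
    obtain ⟨D, hD, hD0⟩ := Finset.mem_sup.mp h0
    have hmin : minOf D = 0 := Nat.le_zero.mp (minOf_le hD0)
    exact absurd (hmin ▸ mem_image_of_mem minOf hD)
      (zero_notMem_of_mem_schreierOne hmins ⟨_, mem_image_of_mem minOf hD⟩)
  | limit o _ ih =>
    obtain ⟨n, -, hlt, hF⟩ := (mem_schreier_limit_iff ‹_›).mp hF
    exact ih _ hlt hF h0

lemma mem_schreier_succ_of_mem {o : Ordinal.{0}} {F : Finset ℕ} (hF : F ∈ schreier seq o)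
    (h0 : 0 ∉ F) (hne : F.Nonempty) : F ∈ schreier seq (o + 1) := by
  refine mem_schreier_succ_iff.mpr ⟨{F}, ⟨by simpa using hne, by simp [IsSeparated], ?_⟩,
    by simpa using hF, by simp⟩
  have h1 : 1 ≤ minOf F := Nat.one_le_iff_ne_zero.mpr fun h => h0 (h ▸ minOf_mem hne)
  simpa [schreierOne, minOf_singleton] using h1

variable (hseq : IsCtblLadder seq)
include hseq

lemma empty_mem_schreier {o : Ordinal.{0}} (hoc : o.card ≤ Cardinal.aleph0) :
    (∅ : Finset ℕ) ∈ schreier seq o := by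
  induction o using Ordinal.limitRecOn with
  | zero => simp [schreier_zero, schreierZero]
  | add_one o _ =>
    exact mem_schreier_succ_iff.mpr
      ⟨∅, .empty _ empty_mem_schreierOne, by simp, by simp⟩
  | limit o ho ih =>
    exact (mem_schreier_limit_iff ho).mpr ⟨0, by simp, hseq.lt ho hoc 0,
      ih _ (hseq.lt ho hoc 0) (card_le_aleph0_of_le (hseq.lt ho hoc 0).le hoc)⟩

lemma mem_schreier_of_natCast_card_le {o : Ordinal.{0}} (hoc : o.card ≤ Cardinal.aleph0)
    {F : Finset ℕ} (hF : F ∈ schreier seq (F.card : Ordinal)) (h0 : 0 ∉ F)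
    (hle : (F.card : Ordinal) ≤ o) : F ∈ schreier seq o := by
  induction o using Ordinal.limitRecOn with
  | zero =>
    rwa [nonpos_iff_eq_zero.mp hle] at hF
  | add_one o ih =>
    rcases hle.lt_or_eq with hlt | heq
    · have hF' := ih (card_le_aleph0_of_le (le_self_add) hoc) (Order.lt_add_one_iff.mp hlt)
      rcases F.eq_empty_or_nonempty with rfl | hne
      · exact empty_mem_schreier hseq hoc
      · exact mem_schreier_succ_of_mem hF' h0 hne
    · rwa [← heq]
  | limit o ho ih =>
    have hlt := hseq.lt ho hoc F.card
    exact (mem_schreier_limit_iff ho).mpr ⟨F.card, le_rfl, hlt,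
      ih _ hlt (card_le_aleph0_of_le hlt.le hoc) (hseq.natCast_le ho hoc F.card)⟩

lemma mem_schreier_natCast_card {o : Ordinal.{0}} {F : Finset ℕ} (hF : F ∈ schreier seq o)
    (hne : F.Nonempty) (h0 : 0 ∉ F) : F ∈ schreier seq (F.card : Ordinal) := by
  induction o using Ordinal.limitRecOn generalizing F with
  | zero =>
    have hcard : F.card = 1 := le_antisymm (by rw [schreier_zero] at hF; exact hF) hne.card_pos
    rw [hcard, Nat.cast_one, ← zero_add 1]
    exact mem_schreier_succ_of_mem hF h0 hne
  | add_one o ih =>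
    obtain ⟨𝓓, h𝓓, hmem, rfl⟩ := mem_schreier_succ_iff.mp hF
    have hsub : ∀ D ∈ 𝓓, D ⊆ 𝓓.sup id := fun D hD => le_sup (f := id) hD
    by_cases hsmall : ∀ D ∈ 𝓓, D.card < (𝓓.sup id).card
    · have hcard : (𝓓.sup id).card = ((𝓓.sup id).card - 1 : ℕ) + 1 := by
        have := hne.card_pos
        omega
      rw [hcard, Nat.cast_succ]
      refine mem_schreier_succ_iff.mpr ⟨𝓓, h𝓓, fun D hD => ?_, rfl⟩
      have h0D : 0 ∉ D := fun h => h0 (hsub D hD h)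
      exact mem_schreier_of_natCast_card_le hseq
        (by rw [Ordinal.card_nat]; exact Cardinal.natCast_lt_aleph0.le)
        (ih (hmem D hD) (h𝓓.1 D hD) h0D) h0D (by exact_mod_cast Nat.le_sub_one_of_lt (hsmall D hD))
    · obtain ⟨D, hD, hle⟩ : ∃ D ∈ 𝓓, (𝓓.sup id).card ≤ D.card := by simpa using hsmall
      rw [← Finset.eq_of_subset_of_card_le (hsub D hD) hle]
      exact ih (hmem D hD) (h𝓓.1 D hD) fun h => h0 (hsub D hD h)
  | limit o _ ih =>
    obtain ⟨n, -, hlt, hF⟩ := (mem_schreier_limit_iff ‹_›).mp hF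
    exact ih _ hlt hF hne h0

-- A set `F` avoiding `0` lies in `S_{|F|}`, hence in `S_{α_{|F|}}`, whatever `n` was.
lemma mem_schreier_limit_of_mem {o : Ordinal.{0}} (ho : Order.IsSuccLimit o)
    (hoc : o.card ≤ Cardinal.aleph0) {n : ℕ} {F : Finset ℕ} (hF : F ∈ schreier seq (seq o n))
    (h : 0 ∈ F → n ≤ F.card) : F ∈ schreier seq o := by
  rw [mem_schreier_limit_iff ho]
  by_cases h0 : 0 ∈ F
  · exact ⟨n, h h0, hseq.lt ho hoc n, hF⟩
  rcases F.eq_empty_or_nonempty with rfl | hne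
  · exact ⟨0, le_rfl, hseq.lt ho hoc 0,
      empty_mem_schreier hseq (card_le_aleph0_of_le (hseq.lt ho hoc 0).le hoc)⟩
  have hlt := hseq.lt ho hoc F.card
  exact ⟨F.card, le_rfl, hlt, mem_schreier_of_natCast_card_le hseq
    (card_le_aleph0_of_le hlt.le hoc) (mem_schreier_natCast_card hseq hF hne h0) h0
    (hseq.natCast_le ho hoc F.card)⟩

end Schreier

section SchreierSpreading

variable {seq : Ordinal.{0} → ℕ → Ordinal.{0}}

lemma sup_mem_sqFam_schreier_succ {o : Ordinal.{0}} {𝓒 : Finset (Finset ℕ)}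
    (hne : ∀ P ∈ 𝓒, P.Nonempty) (hsep : IsSeparated 𝓒) (hmem : ∀ P ∈ 𝓒, P ∈ schreier seq o)
    {θ : ℕ} (hlow : {w ∈ 𝓒.image minOf | w < θ} ∈ schreierOne)
    (hhigh : {w ∈ 𝓒.image minOf | θ ≤ w} ∈ schreierOne) :
    𝓒.sup id ∈ sqFam (schreier seq (o + 1)) := by
  have hpart : ∀ 𝓓 ⊆ 𝓒, 𝓓.image minOf ∈ schreierOne → 𝓓.sup id ∈ schreier seq (o + 1) :=
    fun 𝓓 h𝓓 hmin => mem_schreier_succ_iff.mpr ⟨𝓓, ⟨fun P hP => hne P (h𝓓 hP),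
      hsep.subset h𝓓, hmin⟩, fun P hP => hmem P (h𝓓 hP), rfl⟩
  refine ⟨_, hpart {P ∈ 𝓒 | minOf P < θ} (filter_subset _ _) (by rwa [filter_image] at hlow), _,
    hpart {P ∈ 𝓒 | θ ≤ minOf P} (filter_subset _ _) (by rwa [filter_image] at hhigh),
    fun a ha b hb => ?_, ?_⟩
  · obtain ⟨P, hP, haP⟩ := mem_sup.mp ha
    obtain ⟨Q, hQ, hbQ⟩ := mem_sup.mp hb
    obtain ⟨hP, hPθ⟩ := mem_filter.mp hP
    obtain ⟨hQ, hQθ⟩ := mem_filter.mp hQ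
    exact hsep.finLT_of_minOf_lt hP hQ (hne P hP) (hne Q hQ) (hPθ.trans_le hQθ) a haP b hbQ
  · rw [← sup_eq_union, ← sup_union, ← filter_or, filter_true_of_mem fun P _ => lt_or_ge _ _]

variable (hseq : IsCtblLadder seq)
include hseq

lemma Spreads.mem_schreier_limit {r : ℕ} {ψ : ℕ → ℕ} {o : Ordinal.{0}}
    (ho : Order.IsSuccLimit o) (hoc : o.card ≤ Cardinal.aleph0) {n : ℕ} {M V X : Finset ℕ}
    (h : Spreads r ψ M V) (hM : M ∈ schreier seq (seq o n)) (hn : n ≤ #M)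
    (hX : X ∈ schreier seq (seq o n)) (hXV : X ⊆ V) : X ∈ schreier seq o :=
  mem_schreier_limit_of_mem hseq ho hoc hX fun h0 => by
    rw [eq_singleton_zero_of_mem_schreier hM (h.zero_mem (hXV h0)), card_singleton] at hn
    exact hn.trans (card_pos.mpr ⟨0, h0⟩)

theorem Spreads.mem_schreier {ψ : ℕ → ℕ} {o : Ordinal.{0}} (hoc : o.card ≤ Cardinal.aleph0)
    {M V : Finset ℕ} (h : Spreads 1 ψ M V) (hM : M ∈ schreier seq o) : V ∈ schreier seq o := by
  induction o using Ordinal.limitRecOn generalizing M V with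
  | zero =>
    rw [schreier_zero] at hM ⊢
    exact (by simpa using h.card_le : #V ≤ #M).trans hM
  | add_one o ih =>
    obtain ⟨𝓜, ⟨h𝓜ne, h𝓜, hmins⟩, hmem, rfl⟩ := mem_schreier_succ_iff.mp hM
    obtain ⟨hsep, hsup, hspreads⟩ := h.refine h𝓜ne h𝓜 (fun E => {{v ∈ V | ψ v ∈ E}})
      (fun _ _ => by simp [IsSeparated]) (fun _ _ => (card_singleton _).le) fun _ _ => sup_singleton
    rw [← hsup]
    refine mem_schreier_succ_iff.mpr ⟨_, ⟨fun P hP => (mem_filter.mp hP).2, hsep,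
      hspreads.mem_schreierOne hmins⟩, fun P hP => ?_, rfl⟩
    obtain ⟨E, hE, hPE⟩ := mem_biUnion.mp (mem_filter.mp hP).1
    rw [mem_singleton.mp hPE]
    exact ih (card_le_aleph0_of_le le_self_add hoc) (h.restrict E) (hmem E hE)
  | limit o ho ih =>
    obtain ⟨n, hn, hlt, hMn⟩ := (mem_schreier_limit_iff ho).mp hM
    exact h.mem_schreier_limit hseq ho hoc hMn hn
      (ih _ hlt (card_le_aleph0_of_le hlt.le hoc) h hMn) subset_rfl

theorem Spreads.mem_sqFam_schreier {ψ : ℕ → ℕ} {o : Ordinal.{0}}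
    (hoc : o.card ≤ Cardinal.aleph0) {M V : Finset ℕ} (h : Spreads 2 ψ M V)
    (hM : M ∈ schreier seq o) : V ∈ sqFam (schreier seq o) := by
  induction o using Ordinal.limitRecOn generalizing M V with
  | zero =>
    rw [schreier_zero] at hM ⊢
    obtain ⟨θ, hlow, hhigh⟩ := exists_split_card_le (h.card_le.trans (Nat.mul_le_mul_left 2 hM))
    exact mem_sqFam_of_split hlow hhigh
  | add_one o ih =>
    obtain ⟨𝓜, ⟨h𝓜ne, h𝓜, hmins⟩, hmem, rfl⟩ := mem_schreier_succ_iff.mp hM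
    have hsplit : ∀ E, ∃ A B : Finset ℕ, E ∈ 𝓜 → A ∈ schreier seq o ∧ B ∈ schreier seq o ∧
        finLT A B ∧ {v ∈ V | ψ v ∈ E} = A ∪ B := by
      intro E
      by_cases hE : E ∈ 𝓜
      · obtain ⟨A, hA, B, hB, hAB, hU⟩ :=
          ih (card_le_aleph0_of_le le_self_add hoc) (h.restrict E) (hmem E hE)
        exact ⟨A, B, fun _ => ⟨hA, hB, hAB, hU⟩⟩
      · exact ⟨∅, ∅, fun h => absurd h hE⟩
    choose A B hAB using hsplit
    obtain ⟨hsep, hsup, hspreads⟩ := h.refine h𝓜ne h𝓜 (fun E => {A E, B E})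
      (fun E hE => .pair (hAB E hE).2.2.1) (fun _ _ => card_le_two) fun E hE => by
        rw [(hAB E hE).2.2.2, sup_insert, sup_singleton]
        rfl
    obtain ⟨θ, hlow, hhigh⟩ := hspreads.exists_split_schreierOne hmins
    rw [← hsup]
    refine sup_mem_sqFam_schreier_succ (fun P hP => (mem_filter.mp hP).2) hsep (fun P hP => ?_)
      hlow hhigh
    obtain ⟨E, hE, hPE⟩ := mem_biUnion.mp (mem_filter.mp hP).1
    rcases mem_insert.mp hPE with rfl | hPB
    · exact (hAB E hE).1
    · exact mem_singleton.mp hPB ▸ (hAB E hE).2.1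
  | limit o ho ih =>
    obtain ⟨n, hn, hlt, hMn⟩ := (mem_schreier_limit_iff ho).mp hM
    obtain ⟨A, hA, B, hB, hAB, rfl⟩ := ih _ hlt (card_le_aleph0_of_le hlt.le hoc) h hMn
    exact ⟨A, h.mem_schreier_limit hseq ho hoc hMn hn hA subset_union_left,
      B, h.mem_schreier_limit hseq ho hoc hMn hn hB subset_union_right, hAB, rfl⟩

end SchreierSpreading

/-! ### The norms -/

-- The `ℓ¹` norm bounds all the norms below, which makes the suprema defining them finite.
noncomputable def l1 (x : ℕ →₀ ℝ) : ℝ := sigmaF x.support x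

lemma sigmaF_nonneg (F : Finset ℕ) (x : ℕ →₀ ℝ) : 0 ≤ sigmaF F x :=
  sum_nonneg fun _ _ => abs_nonneg _

lemma sigmaF_le_l1 (F : Finset ℕ) (x : ℕ →₀ ℝ) : sigmaF F x ≤ l1 x := by
  unfold sigmaF l1
  rw [← sum_filter_ne_zero]
  refine sum_le_sum_of_subset_of_nonneg (fun j hj => ?_) fun _ _ _ => abs_nonneg _
  exact Finsupp.mem_support_iff.mpr (abs_ne_zero.mp (mem_filter.mp hj).2)

lemma sigmaF_add_le (F : Finset ℕ) (u v : ℕ →₀ ℝ) : sigmaF F (u + v) ≤ sigmaF F u + sigmaF F v := by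
  unfold sigmaF
  rw [← sum_add_distrib]
  exact sum_le_sum fun j _ => abs_add_le _ _

lemma sigmaF_smul (F : Finset ℕ) (c : ℝ) (u : ℕ →₀ ℝ) : sigmaF F (c • u) = |c| * sigmaF F u := by
  simp [sigmaF, mul_sum, abs_mul]

lemma sigmaF_eq_zero_of_disjoint {F : Finset ℕ} {u : ℕ →₀ ℝ} (h : Disjoint F u.support) :
    sigmaF F u = 0 :=
  sum_eq_zero fun j hj => by rw [Finsupp.notMem_support_iff.mp (disjoint_left.mp h hj), abs_zero]

lemma sigmaF_sum_smul_le {ι : Type*} (F : Finset ℕ) (S : Finset ι) (c : ι → ℝ)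
    (u : ι → ℕ →₀ ℝ) : sigmaF F (∑ k ∈ S, c k • u k) ≤ ∑ k ∈ S, |c k| * sigmaF F (u k) :=
  (le_sum_of_subadditive (sigmaF F) (by simp [sigmaF]) (sigmaF_add_le F) S _).trans_eq
    (sum_congr rfl fun k _ => sigmaF_smul F (c k) (u k))

lemma restr_apply (E : Finset ℕ) (x : ℕ →₀ ℝ) (j : ℕ) :
    restr E x j = if j ∈ E then x j else 0 :=
  Finsupp.filter_apply _ _ _

lemma support_restr_subset (E : Finset ℕ) (x : ℕ →₀ ℝ) : (restr E x).support ⊆ x.support := by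
  rw [restr, Finsupp.support_filter]
  exact filter_subset _ _

lemma restr_add (E : Finset ℕ) (u v : ℕ →₀ ℝ) : restr E (u + v) = restr E u + restr E v :=
  Finsupp.filter_add

lemma restr_smul (E : Finset ℕ) (c : ℝ) (u : ℕ →₀ ℝ) : restr E (c • u) = c • restr E u :=
  Finsupp.filter_smul

lemma restr_sum {ι : Type*} (E : Finset ℕ) (S : Finset ι) (f : ι → ℕ →₀ ℝ) :
    restr E (∑ k ∈ S, f k) = ∑ k ∈ S, restr E (f k) :=
  map_sum (Finsupp.filterAddHom (· ∈ E)) f S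

lemma restr_empty (x : ℕ →₀ ℝ) : restr ∅ x = 0 := by
  ext j
  simp [restr_apply]

lemma restr_eq_zero_of_disjoint {E : Finset ℕ} {u : ℕ →₀ ℝ} (h : Disjoint E u.support) :
    restr E u = 0 := by
  ext j
  rw [restr_apply, Finsupp.coe_zero, Pi.zero_apply]
  split_ifs with hj
  · exact Finsupp.notMem_support_iff.mp (disjoint_left.mp h hj)
  · rfl

lemma l1_restr (E : Finset ℕ) (x : ℕ →₀ ℝ) : l1 (restr E x) = sigmaF {j ∈ x.support | j ∈ E} x := by
  unfold l1 sigmaF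
  rw [restr, Finsupp.support_filter]
  exact sum_congr rfl fun j hj => by rw [Finsupp.filter_apply, if_pos (mem_filter.mp hj).2]

lemma half_sum_le_l1 {𝓓 : Finset (Finset ℕ)} (h𝓓 : (𝓓 : Set (Finset ℕ)).PairwiseDisjoint id)
    {f : (ℕ →₀ ℝ) → ℝ} (hf : ∀ y, f y ≤ l1 y) (x : ℕ →₀ ℝ) :
    1 / 2 * ∑ E ∈ 𝓓, f (restr E x) ≤ l1 x := by
  classical
  have hdisj : (𝓓 : Set (Finset ℕ)).PairwiseDisjoint fun E => {j ∈ x.support | j ∈ E} :=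
    fun E hE F hF hEF => disjoint_left.mpr fun j hjE hjF =>
      disjoint_left.mp (h𝓓 hE hF hEF) (mem_filter.mp hjE).2 (mem_filter.mp hjF).2
  have hsum : ∑ E ∈ 𝓓, f (restr E x) ≤ l1 x :=
    calc ∑ E ∈ 𝓓, f (restr E x) ≤ ∑ E ∈ 𝓓, sigmaF {j ∈ x.support | j ∈ E} x :=
          sum_le_sum fun E _ => (hf _).trans (l1_restr E x).le
      _ = sigmaF (𝓓.biUnion fun E => {j ∈ x.support | j ∈ E}) x := (sum_biUnion hdisj).symm
      _ ≤ l1 x := sum_le_sum_of_subset_of_nonneg (biUnion_subset.mpr fun _ _ => filter_subset _ _)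
          fun _ _ _ => abs_nonneg _
  have : 0 ≤ l1 x := sigmaF_nonneg _ _
  linarith

lemma famNorm_bddAbove (𝓕 : Set (Finset ℕ)) (x : ℕ →₀ ℝ) :
    BddAbove {r : ℝ | ∃ F ∈ 𝓕, r = sigmaF F x} :=
  ⟨l1 x, by rintro _ ⟨F, -, rfl⟩; exact sigmaF_le_l1 F x⟩

lemma sigmaF_le_famNorm {𝓕 : Set (Finset ℕ)} {F : Finset ℕ} (hF : F ∈ 𝓕) (x : ℕ →₀ ℝ) :
    sigmaF F x ≤ famNorm 𝓕 x :=
  le_csSup (famNorm_bddAbove 𝓕 x) ⟨F, hF, rfl⟩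

lemma famNorm_le {𝓕 : Set (Finset ℕ)} {x : ℕ →₀ ℝ} {C : ℝ} (h : ∀ F ∈ 𝓕, sigmaF F x ≤ C)
    (hC : 0 ≤ C) : famNorm 𝓕 x ≤ C :=
  Real.sSup_le (by rintro _ ⟨F, hF, rfl⟩; exact h F hF) hC

section NormSeq

variable {Sa Sadm : Set (Finset ℕ)}

lemma normSeq_succ_eq (n : ℕ) (x : ℕ →₀ ℝ) :
    normSeq Sa Sadm (n + 1) x = max (normSeq Sa Sadm n x)
      (sSup {r : ℝ | ∃ 𝓓, IsAdmissibleFamily Sadm 𝓓 ∧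
        r = 1 / 2 * ∑ E ∈ 𝓓, normSeq Sa Sadm n (restr E x)}) := by
  classical
  rw [normSeq]
  congr 2
  ext r
  constructor
  · rintro ⟨l, hl, rfl⟩
    exact ⟨l.toFinset, hl.toFinset, by rw [List.sum_toFinset _ hl.nodup]⟩
  · rintro ⟨𝓓, h𝓓, rfl⟩
    obtain ⟨l, hl, rfl⟩ := h𝓓.exists_isAdmissible
    exact ⟨l, hl, by rw [List.sum_toFinset _ hl.nodup]⟩

lemma normSeq_le_l1 (n : ℕ) (x : ℕ →₀ ℝ) : normSeq Sa Sadm n x ≤ l1 x := by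
  induction n generalizing x with
  | zero => exact famNorm_le (fun F _ => sigmaF_le_l1 F x) (sigmaF_nonneg _ x)
  | succ n ih =>
    rw [normSeq_succ_eq]
    refine max_le (ih x) (Real.sSup_le ?_ (sigmaF_nonneg _ x))
    rintro _ ⟨𝓓, h𝓓, rfl⟩
    exact half_sum_le_l1 h𝓓.2.1.pairwiseDisjoint ih x

lemma half_sum_le_normSeq_succ {𝓓 : Finset (Finset ℕ)} (h𝓓 : IsAdmissibleFamily Sadm 𝓓)
    (n : ℕ) (x : ℕ →₀ ℝ) :
    1 / 2 * ∑ E ∈ 𝓓, normSeq Sa Sadm n (restr E x) ≤ normSeq Sa Sadm (n + 1) x := by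
  rw [normSeq_succ_eq]
  refine le_max_of_le_right (le_csSup ⟨l1 x, ?_⟩ ⟨𝓓, h𝓓, rfl⟩)
  rintro _ ⟨𝓓', h𝓓', rfl⟩
  exact half_sum_le_l1 h𝓓'.2.1.pairwiseDisjoint (normSeq_le_l1 n) x

lemma sum_normSeq_restr_le_two_mul {𝓓 : Finset (Finset ℕ)} (h𝓓 : IsAdmissibleFamily Sadm 𝓓)
    (n : ℕ) (x : ℕ →₀ ℝ) :
    ∑ E ∈ 𝓓, normSeq Sa Sadm n (restr E x) ≤ 2 * normSeq Sa Sadm (n + 1) x := by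
  linarith [half_sum_le_normSeq_succ (Sa := Sa) h𝓓 n x]

lemma normSeq_le_succ (n : ℕ) (x : ℕ →₀ ℝ) : normSeq Sa Sadm n x ≤ normSeq Sa Sadm (n + 1) x := by
  rw [normSeq_succ_eq]
  exact le_max_left _ _

lemma normSeq_mono (x : ℕ →₀ ℝ) : Monotone fun n => normSeq Sa Sadm n x :=
  monotone_nat_of_le_succ fun n => normSeq_le_succ n x

lemma normSeq_le_tnorm (n : ℕ) (x : ℕ →₀ ℝ) : normSeq Sa Sadm n x ≤ tnorm Sa Sadm x :=
  le_ciSup (f := fun m => normSeq Sa Sadm m x)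
    ⟨l1 x, by rintro _ ⟨m, rfl⟩; exact normSeq_le_l1 m x⟩ n

lemma normSeq_nonneg (hSa : ∅ ∈ Sa) (n : ℕ) (x : ℕ →₀ ℝ) : 0 ≤ normSeq Sa Sadm n x := by
  induction n with
  | zero => exact (sigmaF_nonneg ∅ x).trans (sigmaF_le_famNorm hSa x)
  | succ n ih => exact ih.trans (normSeq_le_succ n x)

variable (hSa : ∅ ∈ Sa)
include hSa

lemma normSeq_succ_le {n : ℕ} {x : ℕ →₀ ℝ} {C : ℝ} (h : normSeq Sa Sadm n x ≤ C)
    (hadm : ∀ 𝓓, IsAdmissibleFamily Sadm 𝓓 → 1 / 2 * ∑ E ∈ 𝓓, normSeq Sa Sadm n (restr E x) ≤ C) :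
    normSeq Sa Sadm (n + 1) x ≤ C := by
  rw [normSeq_succ_eq]
  refine max_le h (Real.sSup_le ?_ ((normSeq_nonneg hSa n x).trans h))
  rintro _ ⟨𝓓, h𝓓, rfl⟩
  exact hadm 𝓓 h𝓓

lemma normSeq_le_of_abs_le (n : ℕ) {u v : ℕ →₀ ℝ} (h : ∀ j, |u j| ≤ |v j|) :
    normSeq Sa Sadm n u ≤ normSeq Sa Sadm n v := by
  induction n generalizing u v with
  | zero =>
    exact famNorm_le (fun F hF => (sum_le_sum fun j _ => h j).trans (sigmaF_le_famNorm hF v))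
      (normSeq_nonneg hSa 0 v)
  | succ n ih =>
    refine normSeq_succ_le hSa ((ih h).trans (normSeq_le_succ n v)) fun 𝓓 h𝓓 =>
      le_trans ?_ (half_sum_le_normSeq_succ h𝓓 n v)
    gcongr with E
    refine ih fun j => ?_
    simp only [restr_apply]
    split_ifs
    exacts [h j, le_rfl]

lemma normSeq_restr_le (n : ℕ) (E : Finset ℕ) (x : ℕ →₀ ℝ) :
    normSeq Sa Sadm n (restr E x) ≤ normSeq Sa Sadm n x :=
  normSeq_le_of_abs_le hSa n fun j => by
    rw [restr_apply]
    split_ifs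
    exacts [le_rfl, by simp]

lemma normSeq_add_le (n : ℕ) (u v : ℕ →₀ ℝ) :
    normSeq Sa Sadm n (u + v) ≤ normSeq Sa Sadm n u + normSeq Sa Sadm n v := by
  induction n generalizing u v with
  | zero =>
    exact famNorm_le (fun F hF => (sigmaF_add_le F u v).trans
      (add_le_add (sigmaF_le_famNorm hF u) (sigmaF_le_famNorm hF v)))
      (add_nonneg (normSeq_nonneg hSa 0 u) (normSeq_nonneg hSa 0 v))
  | succ n ih =>
    refine normSeq_succ_le hSa ((ih u v).trans (add_le_add (normSeq_le_succ n u)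
      (normSeq_le_succ n v))) fun 𝓓 h𝓓 => ?_
    calc 1 / 2 * ∑ E ∈ 𝓓, normSeq Sa Sadm n (restr E (u + v))
        ≤ 1 / 2 * ∑ E ∈ 𝓓, normSeq Sa Sadm n (restr E u) +
            1 / 2 * ∑ E ∈ 𝓓, normSeq Sa Sadm n (restr E v) := by
          rw [← mul_add, ← sum_add_distrib]
          gcongr with E
          exact (restr_add E u v ▸ ih _ _)
      _ ≤ _ := add_le_add (half_sum_le_normSeq_succ h𝓓 n u) (half_sum_le_normSeq_succ h𝓓 n v)

lemma normSeq_smul_le (n : ℕ) (c : ℝ) (u : ℕ →₀ ℝ) :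
    normSeq Sa Sadm n (c • u) ≤ |c| * normSeq Sa Sadm n u := by
  induction n generalizing u with
  | zero =>
    exact famNorm_le (fun F hF => (sigmaF_smul F c u).trans_le
      (mul_le_mul_of_nonneg_left (sigmaF_le_famNorm hF u) (abs_nonneg c)))
      (mul_nonneg (abs_nonneg c) (normSeq_nonneg hSa 0 u))
  | succ n ih =>
    refine normSeq_succ_le hSa ((ih u).trans (mul_le_mul_of_nonneg_left (normSeq_le_succ n u)
      (abs_nonneg c))) fun 𝓓 h𝓓 => ?_
    calc 1 / 2 * ∑ E ∈ 𝓓, normSeq Sa Sadm n (restr E (c • u))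
        ≤ 1 / 2 * ∑ E ∈ 𝓓, |c| * normSeq Sa Sadm n (restr E u) := by
          gcongr with E
          exact (restr_smul E c u ▸ ih _)
      _ = |c| * (1 / 2 * ∑ E ∈ 𝓓, normSeq Sa Sadm n (restr E u)) := by
          rw [← mul_sum]
          ring
      _ ≤ _ := mul_le_mul_of_nonneg_left (half_sum_le_normSeq_succ h𝓓 n u) (abs_nonneg c)

lemma normSeq_zero (n : ℕ) : normSeq Sa Sadm n 0 = 0 :=
  le_antisymm (by simpa using normSeq_smul_le hSa n 0 0) (normSeq_nonneg hSa n 0)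

lemma normSeq_sum_le {ι : Type*} (n : ℕ) (S : Finset ι) (f : ι → ℕ →₀ ℝ) :
    normSeq Sa Sadm n (∑ k ∈ S, f k) ≤ ∑ k ∈ S, normSeq Sa Sadm n (f k) :=
  le_sum_of_subadditive _ (normSeq_zero hSa n).le (normSeq_add_le hSa n) S f

lemma normSeq_eq_zero_of_disjoint {x : ℕ →₀ ℝ} (h : ∀ F ∈ Sa, Disjoint F x.support) (n : ℕ) :
    normSeq Sa Sadm n x = 0 := by
  induction n generalizing x with
  | zero =>
    refine le_antisymm (famNorm_le (fun F hF => (sum_eq_zero fun j hj => ?_).le) le_rfl)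
      (normSeq_nonneg hSa 0 x)
    rw [abs_eq_zero, ← Finsupp.notMem_support_iff]
    exact disjoint_left.mp (h F hF) hj
  | succ n ih =>
    refine le_antisymm (normSeq_succ_le hSa (ih h).le fun 𝓓 _ => ?_) (normSeq_nonneg hSa _ x)
    rw [sum_eq_zero fun E _ => ih fun F hF => (h F hF).mono_right (support_restr_subset E x)]
    simp

lemma exists_not_disjoint_of_tnorm_ne_zero {x : ℕ →₀ ℝ} (h : tnorm Sa Sadm x ≠ 0) :
    ∃ F ∈ Sa, ¬ Disjoint F x.support := by
  by_contra! hdisj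
  exact h (by simp [tnorm, normSeq_eq_zero_of_disjoint hSa hdisj])

end NormSeq

/-! ### Block sequences -/

section SumSingle

variable {ι : Type*} {i : ι → ℕ} (hi : Function.Injective i) (c : ι → ℝ)
include hi

lemma sum_single_apply {S : Finset ι} {k : ι} (hk : k ∈ S) :
    (∑ l ∈ S, c l • Finsupp.single (i l) (1 : ℝ)) (i k) = c k := by
  rw [Finsupp.finsetSum_apply, sum_eq_single k (fun l _ hlk => by simp [hi.ne hlk])
    (fun h => absurd hk h)]
  simp

lemma restr_image_sum_single {S T : Finset ι} (hTS : T ⊆ S) :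
    restr (T.image i) (∑ k ∈ S, c k • Finsupp.single (i k) (1 : ℝ)) =
      ∑ k ∈ T, c k • Finsupp.single (i k) (1 : ℝ) := by
  classical
  rw [restr_sum, ← sum_subset hTS fun k _ hkT => ?_]
  · refine sum_congr rfl fun k hk => ?_
    rw [restr, Finsupp.filter_smul, Finsupp.filter_single_of_pos _ (mem_image_of_mem i hk)]
  · rw [restr, Finsupp.filter_smul, Finsupp.filter_single_of_neg, smul_zero]
    simpa [hi.eq_iff] using hkT

end SumSingle

noncomputable def maxSupp (u : ℕ →₀ ℝ) : ℕ := u.support.sup id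

lemma maxSupp_mem {u : ℕ →₀ ℝ} (h : u.support.Nonempty) : maxSupp u ∈ u.support := by
  obtain ⟨j, hj, heq⟩ := exists_mem_eq_sup _ h id
  rwa [maxSupp, heq]

lemma le_maxSupp {u : ℕ →₀ ℝ} {j : ℕ} (hj : j ∈ u.support) : j ≤ maxSupp u :=
  le_sup (f := id) hj

noncomputable def firstPt (E : Finset ℕ) (u : ℕ →₀ ℝ) : ℕ := minOf (E ∩ u.support)

section FirstPt

variable {E : Finset ℕ} {u : ℕ →₀ ℝ} (h : ¬Disjoint E u.support)
include h

lemma firstPt_mem : firstPt E u ∈ E ∩ u.support :=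
  minOf_mem (not_disjoint_iff_nonempty_inter.mp h)

lemma firstPt_le_maxSupp : firstPt E u ≤ maxSupp u :=
  le_maxSupp (mem_inter.mp (firstPt_mem h)).2

end FirstPt

lemma firstPt_le {E : Finset ℕ} {u : ℕ →₀ ℝ} {a : ℕ} (haE : a ∈ E) (hau : a ∈ u.support) :
    firstPt E u ≤ a :=
  minOf_le (mem_inter.mpr ⟨haE, hau⟩)

section BlockSequence

variable {ι : Type*} [LinearOrder ι] {x : ι → ℕ →₀ ℝ}
  (hblock : ∀ k l, k < l → finLT (x k).support (x l).support)
include hblock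

lemma strictMono_maxSupp (hne : ∀ k, (x k).support.Nonempty) :
    StrictMono fun k => maxSupp (x k) := fun k l hkl =>
  hblock k l hkl _ (maxSupp_mem (hne k)) _ (maxSupp_mem (hne l))

lemma firstPt_lt_firstPt {E : Finset ℕ} {k l : ι} (hk : ¬Disjoint E (x k).support)
    (hl : ¬Disjoint E (x l).support) (hkl : k < l) : firstPt E (x k) < firstPt E (x l) :=
  hblock k l hkl _ (mem_inter.mp (firstPt_mem hk)).2 _ (mem_inter.mp (firstPt_mem hl)).2

variable (hne : ∀ k, (x k).support.Nonempty)
include hne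

lemma spreads_one_image_maxSupp {F : Finset ℕ} {T : Finset ι}
    (hT : ∀ k ∈ T, ¬Disjoint F (x k).support) :
    Spreads 1 (Function.extend (fun k => maxSupp (x k)) (fun k => firstPt F (x k)) 0) F
      (T.image fun k => maxSupp (x k)) := by
  have hmono := strictMono_maxSupp hblock hne
  have hψ : ∀ k, Function.extend (fun k => maxSupp (x k)) (fun k => firstPt F (x k)) 0
      (maxSupp (x k)) = firstPt F (x k) := hmono.injective.extend_apply _ _
  refine spreads_one_of_strictMonoOn ?_ ?_ ?_
  · simp only [mem_image, forall_exists_index, and_imp]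
    rintro _ k hk rfl
    exact hψ k ▸ (mem_inter.mp (firstPt_mem (hT k hk))).1
  · simp only [mem_image, forall_exists_index, and_imp]
    rintro _ k hk rfl
    exact hψ k ▸ firstPt_le_maxSupp (hT k hk)
  · simp only [StrictMonoOn, coe_image, Set.mem_image, mem_coe, forall_exists_index, and_imp]
    rintro _ k hk rfl _ l hl rfl hkl
    rw [hψ, hψ]
    exact firstPt_lt_firstPt hblock (hT k hk) (hT l hl) (hmono.lt_iff_lt.mp hkl)

end BlockSequence

section Pieces

variable {ι : Type*} (x : ι → ℕ →₀ ℝ) (𝓔 : Finset (Finset ℕ)) (S : Finset ι)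

open Classical in
noncomputable def spanningIdx : Finset ι :=
  {k ∈ S | ∃ E ∈ 𝓔, ∃ F ∈ 𝓔, E ≠ F ∧ ¬Disjoint E (x k).support ∧ ¬Disjoint F (x k).support}

open Classical in
noncomputable def innerIdx (E : Finset ℕ) : Finset ι :=
  {k ∈ S | ¬Disjoint E (x k).support ∧ ∀ F ∈ 𝓔, F ≠ E → Disjoint F (x k).support}

open Classical in
/-- The singletons `{i_k}` of the blocks `x_k` meeting two members of `𝓔`, together with the
sets of `i_k` over the blocks meeting a single member `E` of `𝓔` (`i_k = max supp x_k`). -/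
noncomputable def pieces : Finset (Finset ℕ) :=
  {D ∈ (spanningIdx x 𝓔 S).image (fun k => {maxSupp (x k)}) ∪
    𝓔.image (fun E => (innerIdx x 𝓔 S E).image fun k => maxSupp (x k)) | D.Nonempty}

variable {x 𝓔 S}

lemma mem_spanningIdx {k : ι} : k ∈ spanningIdx x 𝓔 S ↔ k ∈ S ∧
    ∃ E ∈ 𝓔, ∃ F ∈ 𝓔, E ≠ F ∧ ¬Disjoint E (x k).support ∧ ¬Disjoint F (x k).support := by
  classical
  simp [spanningIdx]

lemma mem_innerIdx {k : ι} {E : Finset ℕ} : k ∈ innerIdx x 𝓔 S E ↔ k ∈ S ∧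
    ¬Disjoint E (x k).support ∧ ∀ F ∈ 𝓔, F ≠ E → Disjoint F (x k).support := by
  classical
  simp [innerIdx]

lemma mem_pieces {D : Finset ℕ} : D ∈ pieces x 𝓔 S ↔ D.Nonempty ∧
    ((∃ k ∈ spanningIdx x 𝓔 S, {maxSupp (x k)} = D) ∨
      ∃ E ∈ 𝓔, (innerIdx x 𝓔 S E).image (fun k => maxSupp (x k)) = D) := by
  classical
  simp only [pieces, mem_filter, mem_union, mem_image]
  exact and_comm

lemma exists_ne_of_mem_spanningIdx {k : ι} (hk : k ∈ spanningIdx x 𝓔 S) (E : Finset ℕ) :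
    ∃ F ∈ 𝓔, F ≠ E ∧ ¬Disjoint F (x k).support := by
  obtain ⟨-, G, hG, H, hH, hGH, hGk, hHk⟩ := mem_spanningIdx.mp hk
  by_cases hGE : G = E
  · exact ⟨H, hH, fun h => hGH (hGE.trans h.symm), hHk⟩
  · exact ⟨G, hG, hGE, hGk⟩

lemma notMem_innerIdx_of_mem_spanningIdx {k : ι} (hk : k ∈ spanningIdx x 𝓔 S)
    (E : Finset ℕ) : k ∉ innerIdx x 𝓔 S E := fun hkE => by
  obtain ⟨F, hF, hFE, hFk⟩ := exists_ne_of_mem_spanningIdx hk E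
  exact hFk ((mem_innerIdx.mp hkE).2.2 F hF hFE)

lemma disjoint_innerIdx {E F : Finset ℕ} (hE : E ∈ 𝓔) (hEF : E ≠ F) :
    Disjoint (innerIdx x 𝓔 S E) (innerIdx x 𝓔 S F) :=
  disjoint_left.mpr fun _ hkE hkF =>
    (mem_innerIdx.mp hkE).2.1 ((mem_innerIdx.mp hkF).2.2 E hE hEF)

lemma not_disjoint_sup_id {E : Finset ℕ} (hE : E ∈ 𝓔) {s : Finset ℕ} (h : ¬Disjoint E s) :
    ¬Disjoint (𝓔.sup id) s :=
  fun hU => h (hU.mono_left (le_sup (f := id) hE))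

lemma firstPt_mem_of_mem_innerIdx {E : Finset ℕ} (hE : E ∈ 𝓔) {k : ι}
    (hk : k ∈ innerIdx x 𝓔 S E) : firstPt (𝓔.sup id) (x k) ∈ E := by
  obtain ⟨-, hkE, honly⟩ := mem_innerIdx.mp hk
  obtain ⟨hU, hsupp⟩ := mem_inter.mp (firstPt_mem (not_disjoint_sup_id hE hkE))
  obtain ⟨F, hF, hmem⟩ := mem_sup.mp hU
  by_cases hFE : F = E
  · exact hFE ▸ hmem
  · exact absurd hsupp (disjoint_left.mp (honly F hF hFE) hmem)

lemma subset_image_of_mem_pieces {D : Finset ℕ} (hD : D ∈ pieces x 𝓔 S) :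
    D ⊆ {k ∈ S | ¬Disjoint (𝓔.sup id) (x k).support}.image fun k => maxSupp (x k) := by
  rcases (mem_pieces.mp hD).2 with ⟨k, hk, rfl⟩ | ⟨E, hE, rfl⟩
  · obtain ⟨hkS, F, hF, -, -, -, hFk, -⟩ := mem_spanningIdx.mp hk
    exact singleton_subset_iff.mpr (mem_image_of_mem _ (mem_filter.mpr
      ⟨hkS, not_disjoint_sup_id hF hFk⟩))
  · exact image_subset_image fun k hk => mem_filter.mpr
      ⟨(mem_innerIdx.mp hk).1, not_disjoint_sup_id hE (mem_innerIdx.mp hk).2.1⟩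

lemma exists_firstPt_mem_of_mem_pieces (hi : Function.Injective fun k => maxSupp (x k))
    {D : Finset ℕ} (hD : D ∈ pieces x 𝓔 S) :
    ∃ E ∈ 𝓔, ∀ k, maxSupp (x k) ∈ D → firstPt (𝓔.sup id) (x k) ∈ E := by
  rcases (mem_pieces.mp hD).2 with ⟨k, hk, rfl⟩ | ⟨E, hE, rfl⟩
  · obtain ⟨-, F, hF, -, -, -, hFk, -⟩ := mem_spanningIdx.mp hk
    obtain ⟨E, hE, hkE⟩ :=
      mem_sup.mp (mem_inter.mp (firstPt_mem (not_disjoint_sup_id hF hFk))).1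
    exact ⟨E, hE, fun l hl => hi (mem_singleton.mp hl) ▸ hkE⟩
  · refine ⟨E, hE, fun k hk => ?_⟩
    obtain ⟨l, hl, hlk⟩ := mem_image.mp hk
    exact hi hlk ▸ firstPt_mem_of_mem_innerIdx hE hl

lemma sum_pieces (hi : Function.Injective fun k => maxSupp (x k)) (g : Finset ℕ → ℝ)
    (hg : g ∅ = 0) :
    ∑ D ∈ pieces x 𝓔 S, g D = ∑ k ∈ spanningIdx x 𝓔 S, g {maxSupp (x k)} +
      ∑ E ∈ 𝓔, g ((innerIdx x 𝓔 S E).image fun k => maxSupp (x k)) := by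
  classical
  rw [pieces, sum_filter_of_ne fun D _ hD => nonempty_iff_ne_empty.mpr fun h => hD (h ▸ hg),
    sum_union, sum_image fun k _ l _ h => hi (singleton_injective h),
    sum_image_of_disjoint hg fun E hE F _ hEF => (disjoint_image hi).mpr (disjoint_innerIdx hE hEF)]
  refine disjoint_left.mpr fun D hD hD' => ?_
  obtain ⟨k, hk, rfl⟩ := mem_image.mp hD
  obtain ⟨E, -, hE⟩ := mem_image.mp hD'
  obtain ⟨l, hl, hlk⟩ := mem_image.mp (hE ▸ mem_singleton_self (maxSupp (x k)))
  exact notMem_innerIdx_of_mem_spanningIdx hk E (hi hlk ▸ hl)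

end Pieces

section PiecesAdmissible

variable {ι : Type*} [LinearOrder ι] {x : ι → ℕ →₀ ℝ} {𝓔 : Finset (Finset ℕ)} {S : Finset ι}
  (hblock : ∀ k l, k < l → finLT (x k).support (x l).support) (h𝓔 : IsSeparated 𝓔)
include hblock h𝓔

-- A block meeting two members of `𝓔`, whose first point lies in `E`, also meets a member after
-- `E`; the supports of two such blocks would interleave.
lemma card_spanningIdx_firstPt_mem_le_one {E : Finset ℕ} (hE : E ∈ 𝓔) :
    #{k ∈ spanningIdx x 𝓔 S | firstPt (𝓔.sup id) (x k) ∈ E} ≤ 1 := by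
  suffices h : ∀ k ∈ spanningIdx x 𝓔 S, firstPt (𝓔.sup id) (x k) ∈ E →
      ∀ l ∈ spanningIdx x 𝓔 S, firstPt (𝓔.sup id) (x l) ∈ E → ¬ k < l by
    refine card_le_one.mpr fun k hk l hl => ?_
    obtain ⟨hk, hkE⟩ := mem_filter.mp hk
    obtain ⟨hl, hlE⟩ := mem_filter.mp hl
    exact le_antisymm (not_lt.mp (h l hl hlE k hk hkE)) (not_lt.mp (h k hk hkE l hl hlE))
  intro k hk hkE l hl hlE hkl
  obtain ⟨F, hF, hFE, hFk⟩ := exists_ne_of_mem_spanningIdx hk E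
  obtain ⟨b, hbF, hbk⟩ := not_disjoint_iff.mp hFk
  obtain ⟨G, hG, -, hGl⟩ := exists_ne_of_mem_spanningIdx hl E
  have hl_supp := (mem_inter.mp (firstPt_mem (not_disjoint_sup_id hG hGl))).2
  rcases h𝓔 hE hF hFE.symm with hEF | hFE'
  · exact (hEF _ hlE b hbF).not_gt (hblock k l hkl b hbk _ hl_supp)
  · exact (hFE' b hbF _ hkE).not_ge (firstPt_le (le_sup (f := id) hF hbF) hbk)

-- A block meeting a member other than `E` cannot lie between two blocks meeting only `E`.
lemma finLT_image_innerIdx_or (hmono : StrictMono fun k => maxSupp (x k)) {t : ι}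
    (ht : t ∈ spanningIdx x 𝓔 S) {E : Finset ℕ} (hE : E ∈ 𝓔) :
    finLT ((innerIdx x 𝓔 S E).image fun k => maxSupp (x k)) {maxSupp (x t)} ∨
      finLT {maxSupp (x t)} ((innerIdx x 𝓔 S E).image fun k => maxSupp (x k)) := by
  suffices h : (∀ k ∈ innerIdx x 𝓔 S E, k < t) ∨ ∀ k ∈ innerIdx x 𝓔 S E, t < k by
    simp only [finLT, mem_image, mem_singleton, forall_exists_index, and_imp]
    refine h.imp (fun h => ?_) fun h => ?_
    · rintro _ k hk rfl _ rfl
      exact hmono (h k hk)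
    · rintro _ rfl _ k hk rfl
      exact hmono (h k hk)
  by_contra! hcon
  obtain ⟨⟨k, hk, htk⟩, ⟨l, hl, hlt⟩⟩ := hcon
  have hnot := notMem_innerIdx_of_mem_spanningIdx ht E
  replace htk := lt_of_le_of_ne htk fun h => hnot (h ▸ hk)
  replace hlt := lt_of_le_of_ne hlt fun h => hnot (h ▸ hl)
  obtain ⟨F, hF, hFE, hFt⟩ := exists_ne_of_mem_spanningIdx ht E
  obtain ⟨b, hbF, hbt⟩ := not_disjoint_iff.mp hFt
  obtain ⟨a, haE, hak⟩ := not_disjoint_iff.mp (mem_innerIdx.mp hk).2.1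
  obtain ⟨a', haE', hal⟩ := not_disjoint_iff.mp (mem_innerIdx.mp hl).2.1
  rcases h𝓔 hE hF hFE.symm with hEF | hFE'
  · exact (hEF a haE b hbF).not_gt (hblock t k htk b hbt a hak)
  · exact (hFE' b hbF a' haE').not_gt (hblock l t hlt a' hal b hbt)

lemma exists_isSeparated_pieces_firstPt_mem (hmono : StrictMono fun k => maxSupp (x k))
    {E : Finset ℕ} (hE : E ∈ 𝓔) :
    ∃ 𝓠 : Finset (Finset ℕ), IsSeparated 𝓠 ∧ #𝓠 ≤ 2 ∧ ∀ D ∈ pieces x 𝓔 S,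
      (∀ k, maxSupp (x k) ∈ D → firstPt (𝓔.sup id) (x k) ∈ E) → D ∈ 𝓠 := by
  classical
  set T := {k ∈ spanningIdx x 𝓔 S | firstPt (𝓔.sup id) (x k) ∈ E}
  set A := (innerIdx x 𝓔 S E).image fun k => maxSupp (x k)
  set 𝓢 := T.image fun k => ({maxSupp (x k)} : Finset ℕ)
  have hT : #T ≤ 1 := card_spanningIdx_firstPt_mem_le_one hblock h𝓔 hE
  refine ⟨insert A 𝓢, ?_, (card_insert_le _ _).trans (Nat.succ_le_succ (card_image_le.trans hT)),
    fun D hD hDE => ?_⟩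
  · have hsing : ∀ P ∈ 𝓢, ∀ Q ∈ 𝓢, P = Q := by
      simp only [𝓢, mem_image]
      rintro _ ⟨k, hk, rfl⟩ _ ⟨l, hl, rfl⟩
      rw [card_le_one.mp hT k hk l hl]
    have hA : ∀ P ∈ 𝓢, finLT A P ∨ finLT P A := by
      simp only [𝓢, mem_image]
      rintro _ ⟨k, hk, rfl⟩
      exact finLT_image_innerIdx_or hblock h𝓔 hmono (mem_filter.mp hk).1 hE
    intro P hP Q hQ hPQ
    simp only [coe_insert, Set.mem_insert_iff, mem_coe] at hP hQ
    rcases hP with rfl | hP <;> rcases hQ with rfl | hQ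
    · exact absurd rfl hPQ
    · exact hA Q hQ
    · exact (hA P hP).symm
    · exact absurd (hsing P hP Q hQ) hPQ
  rcases (mem_pieces.mp hD).2 with ⟨k, hk, rfl⟩ | ⟨F, hF, rfl⟩
  · exact mem_insert_of_mem (mem_image_of_mem _ (mem_filter.mpr ⟨hk, hDE k (mem_singleton_self _)⟩))
  · obtain ⟨_, hv⟩ := (mem_pieces.mp hD).1
    obtain ⟨k, hk, rfl⟩ := mem_image.mp hv
    rw [h𝓔.eq_of_mem hF hE (firstPt_mem_of_mem_innerIdx hF hk) (hDE k hv)]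
    exact mem_insert_self _ _

end PiecesAdmissible

-- The minima of the pieces spread twofold onto `{min E : E ∈ 𝓔}` via `i_k ↦ min E`, where `E` is
-- the member containing the first point of `x_k` in `⋃ 𝓔`.
theorem isAdmissibleFamily_pieces {seq : Ordinal.{0} → ℕ → Ordinal.{0}} (hseq : IsCtblLadder seq)
    {b : Ordinal.{0}} (hb : b.card ≤ Cardinal.aleph0) {ι : Type*} [LinearOrder ι]
    {x : ι → ℕ →₀ ℝ} (hblock : ∀ k l, k < l → finLT (x k).support (x l).support)
    (hne : ∀ k, (x k).support.Nonempty) {𝓔 : Finset (Finset ℕ)}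
    (h𝓔 : IsAdmissibleFamily (schreier seq b) 𝓔) (S : Finset ι) :
    IsAdmissibleFamily (sqFam (schreier seq b)) (pieces x 𝓔 S) := by
  have hmono := strictMono_maxSupp hblock hne
  set ψ := Function.extend (fun k => maxSupp (x k)) (fun k => firstPt (𝓔.sup id) (x k)) 0
  have hψ : ∀ k, ψ (maxSupp (x k)) = firstPt (𝓔.sup id) (x k) := hmono.injective.extend_apply _ _
  have hspread := spreads_one_image_maxSupp hblock hne
    (T := {k ∈ S | ¬Disjoint (𝓔.sup id) (x k).support}) fun k hk => (mem_filter.mp hk).2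
  have hψD : ∀ D ∈ pieces x 𝓔 S, ∀ E : Finset ℕ, (∀ v ∈ D, ψ v ∈ E) ↔
      ∀ k, maxSupp (x k) ∈ D → firstPt (𝓔.sup id) (x k) ∈ E := fun D hD E =>
    ⟨fun h k hk => hψ k ▸ h _ hk, fun h v hv => by
      obtain ⟨k, -, rfl⟩ := mem_image.mp (subset_image_of_mem_pieces hD hv)
      exact (hψ k).symm ▸ h k hv⟩
  have hmaps : ∀ D ∈ pieces x 𝓔 S, ∃ E ∈ 𝓔, ∀ v ∈ D, ψ v ∈ E := fun D hD => by
    obtain ⟨E, hE, h⟩ := exists_firstPt_mem_of_mem_pieces hmono.injective hD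
    exact ⟨E, hE, (hψD D hD E).mpr h⟩
  have hgroups := fun E (hE : E ∈ 𝓔) =>
    exists_isSeparated_pieces_firstPt_mem hblock h𝓔.2.1 (S := S) hmono hE
  refine ⟨fun D hD => (mem_pieces.mp hD).1, h𝓔.2.1.of_mapsTo hspread.2.2.1
    (fun D => subset_image_of_mem_pieces) hmaps fun E hE => ?_,
    Spreads.mem_sqFam_schreier hseq hb (spreads_image_minOf h𝓔.1 h𝓔.2.1 hspread.2.1
      hspread.2.2.1 (fun D hD => (mem_pieces.mp hD).1) (fun D => subset_image_of_mem_pieces)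
      hmaps fun E hE => ?_) h𝓔.2.2⟩
  · obtain ⟨𝓠, h𝓠, -, hmem⟩ := hgroups E hE
    exact ⟨𝓠, h𝓠, fun D hD hDE => hmem D hD ((hψD D hD E).mp hDE)⟩
  · obtain ⟨𝓠, -, h𝓠, hmem⟩ := hgroups E hE
    exact ⟨𝓠, h𝓠, fun D hD hDE => hmem D hD ((hψD D hD E).mp hDE)⟩

/-! ### The main estimate -/

lemma restr_sum_smul_eq {ι : Type*} {x : ι → ℕ →₀ ℝ} {𝓔 : Finset (Finset ℕ)} {S : Finset ι}
    {E : Finset ℕ} (hE : E ∈ 𝓔) (c : ι → ℝ) :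
    restr E (∑ k ∈ S, c k • x k) = ∑ k ∈ spanningIdx x 𝓔 S, c k • restr E (x k) +
      restr E (∑ k ∈ innerIdx x 𝓔 S E, c k • x k) := by
  classical
  have hrest : ∀ k ∈ S, k ∉ spanningIdx x 𝓔 S ∪ innerIdx x 𝓔 S E → c k • restr E (x k) = 0 := by
    intro k hkS hk
    rw [mem_union, mem_spanningIdx, mem_innerIdx, not_or] at hk
    by_cases hkE : Disjoint E (x k).support
    · rw [restr_eq_zero_of_disjoint hkE, smul_zero]
    · refine absurd ⟨hkS, hkE, fun F hF hFE => ?_⟩ hk.2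
      by_contra hFk
      exact hk.1 ⟨hkS, E, hE, F, hF, Ne.symm hFE, hkE, hFk⟩
  simp only [restr_sum, restr_smul]
  rw [← sum_union (disjoint_left.mpr fun k hk => notMem_innerIdx_of_mem_spanningIdx hk E)]
  exact (sum_subset (union_subset (fun k hk => (mem_spanningIdx.mp hk).1)
    fun k hk => (mem_innerIdx.mp hk).1) hrest).symm

section MainEstimate

variable {seq : Ordinal.{0} → ℕ → Ordinal.{0}} (hseq : IsCtblLadder seq) {a b : Ordinal.{0}}
  (ha : a.card ≤ Cardinal.aleph0) {ι : Type*} {x : ι → ℕ →₀ ℝ}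
  (hnorm : ∀ k, tnorm (schreier seq a) (schreier seq b) (x k) = 1)

local notation "𝒜" => schreier seq a
local notation "ℬ" => schreier seq b

include hseq ha hnorm

lemma exists_mem_schreier_not_disjoint (k : ι) : ∃ F ∈ 𝒜, ¬Disjoint F (x k).support :=
  exists_not_disjoint_of_tnorm_ne_zero (empty_mem_schreier hseq ha)
    (by rw [hnorm k]; exact one_ne_zero)

lemma support_nonempty_of_tnorm_eq_one (k : ι) : (x k).support.Nonempty := by
  obtain ⟨F, -, hF⟩ := exists_mem_schreier_not_disjoint hseq ha hnorm k
  exact (not_disjoint_iff_nonempty_inter.mp hF).mono inter_subset_right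

variable [LinearOrder ι] (hblock : ∀ k l, k < l → finLT (x k).support (x l).support)
include hblock

lemma image_maxSupp_mem_schreier {F : Finset ℕ} (hF : F ∈ 𝒜) {T : Finset ι}
    (hT : ∀ k ∈ T, ¬Disjoint F (x k).support) : T.image (fun k => maxSupp (x k)) ∈ 𝒜 :=
  Spreads.mem_schreier hseq ha (spreads_one_image_maxSupp hblock
    (support_nonempty_of_tnorm_eq_one hseq ha hnorm) hT) hF

variable (c : ι → ℝ)

lemma abs_le_normSeq_restr_singleton (𝒞 : Set (Finset ℕ)) (n : ℕ) {S : Finset ι} {k : ι}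
    (hk : k ∈ S) : |c k| ≤ normSeq 𝒜 𝒞 n
      (restr {maxSupp (x k)} (∑ l ∈ S, c l • Finsupp.single (maxSupp (x l)) (1 : ℝ))) := by
  have hi := (strictMono_maxSupp hblock (support_nonempty_of_tnorm_eq_one hseq ha hnorm)).injective
  obtain ⟨F, hF, hFk⟩ := exists_mem_schreier_not_disjoint hseq ha hnorm k
  have hmem : ({maxSupp (x k)} : Finset ℕ) ∈ 𝒜 := by
    simpa using image_maxSupp_mem_schreier hseq ha hnorm hblock hF (T := {k}) (by simpa using hFk)
  have hrestr := restr_image_sum_single hi c (singleton_subset_iff.mpr hk)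
  rw [image_singleton, sum_singleton] at hrestr
  rw [hrestr]
  calc |c k| = sigmaF {maxSupp (x k)} (c k • Finsupp.single (maxSupp (x k)) (1 : ℝ)) := by
        simp [sigmaF]
    _ ≤ normSeq 𝒜 𝒞 0 (c k • Finsupp.single (maxSupp (x k)) (1 : ℝ)) := sigmaF_le_famNorm hmem _
    _ ≤ _ := normSeq_mono _ (Nat.zero_le n)

lemma famNorm_sum_smul_le (S : Finset ι) :
    famNorm 𝒜 (∑ k ∈ S, c k • x k) ≤
      famNorm 𝒜 (∑ k ∈ S, c k • Finsupp.single (maxSupp (x k)) (1 : ℝ)) := by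
  classical
  have hi := (strictMono_maxSupp hblock (support_nonempty_of_tnorm_eq_one hseq ha hnorm)).injective
  refine famNorm_le (fun F hF => ?_) (normSeq_nonneg (Sadm := ℬ) (empty_mem_schreier hseq ha) 0 _)
  set K := {k ∈ S | ¬Disjoint F (x k).support}
  calc sigmaF F (∑ k ∈ S, c k • x k) ≤ ∑ k ∈ S, |c k| * sigmaF F (x k) := sigmaF_sum_smul_le F S c x
    _ ≤ ∑ k ∈ K, |c k| := by
        rw [sum_filter]
        refine sum_le_sum fun k _ => ?_
        split_ifs with hk
        · rw [sigmaF_eq_zero_of_disjoint hk, mul_zero]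
        · refine mul_le_of_le_one_right (abs_nonneg _) ((sigmaF_le_famNorm hF (x k)).trans ?_)
          exact (normSeq_le_tnorm (Sadm := ℬ) 0 (x k)).trans (hnorm k).le
    _ = sigmaF (K.image fun k => maxSupp (x k))
          (∑ k ∈ S, c k • Finsupp.single (maxSupp (x k)) (1 : ℝ)) := by
        rw [sigmaF, sum_image fun k _ l _ h => hi h]
        exact sum_congr rfl fun k hk => by rw [sum_single_apply hi c (mem_filter.mp hk).1]
    _ ≤ _ := sigmaF_le_famNorm (image_maxSupp_mem_schreier hseq ha hnorm hblock hF
          fun k hk => (mem_filter.mp hk).2) _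

lemma normSeq_restr_sum_smul_le (𝒞 : Set (Finset ℕ)) (n : ℕ) (S : Finset ι)
    {𝓔 : Finset (Finset ℕ)} {E : Finset ℕ} (hE : E ∈ 𝓔)
    (ih : normSeq 𝒜 ℬ n (∑ k ∈ innerIdx x 𝓔 S E, c k • x k) ≤ 2 * normSeq 𝒜 𝒞 n
      (∑ k ∈ innerIdx x 𝓔 S E, c k • Finsupp.single (maxSupp (x k)) (1 : ℝ))) :
    normSeq 𝒜 ℬ n (restr E (∑ k ∈ S, c k • x k)) ≤
      ∑ k ∈ spanningIdx x 𝓔 S, |c k| * normSeq 𝒜 ℬ n (restr E (x k)) +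
        2 * normSeq 𝒜 𝒞 n (restr ((innerIdx x 𝓔 S E).image fun k => maxSupp (x k))
          (∑ k ∈ S, c k • Finsupp.single (maxSupp (x k)) (1 : ℝ))) := by
  have hA : ∅ ∈ 𝒜 := empty_mem_schreier hseq ha
  have hi := (strictMono_maxSupp hblock (support_nonempty_of_tnorm_eq_one hseq ha hnorm)).injective
  rw [restr_sum_smul_eq hE, restr_image_sum_single hi c fun k hk => (mem_innerIdx.mp hk).1]
  exact (normSeq_add_le hA n _ _).trans (add_le_add ((normSeq_sum_le hA n _ _).trans
    (sum_le_sum fun k _ => normSeq_smul_le hA n _ _)) ((normSeq_restr_le hA n _ _).trans ih))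

lemma sum_spanningIdx_le (𝒞 : Set (Finset ℕ)) (n : ℕ) (S : Finset ι) {𝓔 : Finset (Finset ℕ)}
    (h𝓔 : IsAdmissibleFamily ℬ 𝓔) :
    ∑ k ∈ spanningIdx x 𝓔 S, |c k| * ∑ E ∈ 𝓔, normSeq 𝒜 ℬ n (restr E (x k)) ≤
      2 * ∑ k ∈ spanningIdx x 𝓔 S, normSeq 𝒜 𝒞 n
        (restr {maxSupp (x k)} (∑ l ∈ S, c l • Finsupp.single (maxSupp (x l)) (1 : ℝ))) := by
  rw [mul_sum]
  refine sum_le_sum fun k hk => ?_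
  have hx : ∑ E ∈ 𝓔, normSeq 𝒜 ℬ n (restr E (x k)) ≤ 2 :=
    (sum_normSeq_restr_le_two_mul h𝓔 n (x k)).trans
      (by linarith [normSeq_le_tnorm (Sa := 𝒜) (Sadm := ℬ) (n + 1) (x k), hnorm k])
  have hc := abs_le_normSeq_restr_singleton hseq ha hnorm hblock c 𝒞 n (mem_spanningIdx.mp hk).1
  nlinarith [abs_nonneg (c k)]

variable (hb : b.card ≤ Cardinal.aleph0)
include hb

lemma half_sum_normSeq_restr_le (n : ℕ) (S : Finset ι)
    (ih : ∀ T : Finset ι, normSeq 𝒜 ℬ n (∑ k ∈ T, c k • x k) ≤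
      2 * normSeq 𝒜 (sqFam ℬ) n (∑ k ∈ T, c k • Finsupp.single (maxSupp (x k)) (1 : ℝ)))
    {𝓔 : Finset (Finset ℕ)} (h𝓔 : IsAdmissibleFamily ℬ 𝓔) :
    1 / 2 * ∑ E ∈ 𝓔, normSeq 𝒜 ℬ n (restr E (∑ k ∈ S, c k • x k)) ≤
      2 * normSeq 𝒜 (sqFam ℬ) (n + 1)
        (∑ k ∈ S, c k • Finsupp.single (maxSupp (x k)) (1 : ℝ)) := by
  have hne := support_nonempty_of_tnorm_eq_one hseq ha hnorm
  set y := ∑ k ∈ S, c k • Finsupp.single (maxSupp (x k)) (1 : ℝ)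
  set N : Finset ℕ → ℝ := fun D => normSeq 𝒜 (sqFam ℬ) n (restr D y)
  set B := spanningIdx x 𝓔 S
  have hswap : ∑ E ∈ 𝓔, ∑ k ∈ B, |c k| * normSeq 𝒜 ℬ n (restr E (x k)) =
      ∑ k ∈ B, |c k| * ∑ E ∈ 𝓔, normSeq 𝒜 ℬ n (restr E (x k)) := by
    rw [sum_comm]
    simp only [mul_sum]
  calc 1 / 2 * ∑ E ∈ 𝓔, normSeq 𝒜 ℬ n (restr E (∑ k ∈ S, c k • x k))
      ≤ 1 / 2 * ∑ E ∈ 𝓔, (∑ k ∈ B, |c k| * normSeq 𝒜 ℬ n (restr E (x k)) +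
          2 * N ((innerIdx x 𝓔 S E).image fun k => maxSupp (x k))) := by
        gcongr with E hE
        exact normSeq_restr_sum_smul_le hseq ha hnorm hblock c _ n S hE (ih _)
    _ = 1 / 2 * ∑ k ∈ B, |c k| * ∑ E ∈ 𝓔, normSeq 𝒜 ℬ n (restr E (x k)) +
          ∑ E ∈ 𝓔, N ((innerIdx x 𝓔 S E).image fun k => maxSupp (x k)) := by
        rw [sum_add_distrib, hswap, ← mul_sum]
        ring
    _ ≤ ∑ k ∈ B, N {maxSupp (x k)} +
          ∑ E ∈ 𝓔, N ((innerIdx x 𝓔 S E).image fun k => maxSupp (x k)) := by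
        linarith [sum_spanningIdx_le hseq ha hnorm hblock c (sqFam ℬ) n S h𝓔]
    _ = ∑ D ∈ pieces x 𝓔 S, N D := by
        refine (sum_pieces (strictMono_maxSupp hblock hne).injective N ?_).symm
        simp [N, restr_empty, normSeq_zero (empty_mem_schreier hseq ha)]
    _ ≤ 2 * normSeq 𝒜 (sqFam ℬ) (n + 1) y :=
        sum_normSeq_restr_le_two_mul (isAdmissibleFamily_pieces hseq hb hblock hne h𝓔 S) n y

theorem normSeq_sum_smul_le_two_mul (n : ℕ) (S : Finset ι) :
    normSeq 𝒜 ℬ n (∑ k ∈ S, c k • x k) ≤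
      2 * normSeq 𝒜 (sqFam ℬ) n (∑ k ∈ S, c k • Finsupp.single (maxSupp (x k)) (1 : ℝ)) := by
  have hA : ∅ ∈ 𝒜 := empty_mem_schreier hseq ha
  induction n generalizing S with
  | zero =>
    exact (famNorm_sum_smul_le hseq ha hnorm hblock c S).trans
      (le_mul_of_one_le_left (normSeq_nonneg (Sadm := sqFam ℬ) hA 0 _) one_le_two)
  | succ n ih =>
    refine normSeq_succ_le hA ((ih S).trans ?_) fun 𝓔 h𝓔 =>
      half_sum_normSeq_restr_le hseq ha hnorm hblock c hb n S ih h𝓔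
    gcongr
    exact normSeq_le_succ n _

end MainEstimate

theorem statement3_general (seq : Ordinal → ℕ → Ordinal) (hseq : IsCtblLadder seq)
    (a b : Ordinal) (ha : a.card ≤ Cardinal.aleph0) (hb : b.card ≤ Cardinal.aleph0)
    (p : ℕ) (x : Fin p → (ℕ →₀ ℝ))
    (hblock : ∀ k l : Fin p, k < l → finLT (x k).support (x l).support)
    (hnorm : ∀ k, tnorm (schreier seq a) (schreier seq b) (x k) = 1)
    (c : Fin p → ℝ) :
    tnorm (schreier seq a) (schreier seq b) (∑ k, c k • x k) ≤
      2 * tnorm (schreier seq a) (sqFam (schreier seq b))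
        (∑ k, c k • Finsupp.single ((x k).support.sup id) (1 : ℝ)) ∧
    ∀ n : ℕ, normSeq (schreier seq a) (schreier seq b) n (∑ k, c k • x k) ≤
      2 * normSeq (schreier seq a) (sqFam (schreier seq b)) n
        (∑ k, c k • Finsupp.single ((x k).support.sup id) (1 : ℝ)) := by
  have key := fun n => normSeq_sum_smul_le_two_mul hseq ha hnorm hblock c hb n univ
  refine ⟨ciSup_le fun n => (key n).trans ?_, key⟩
  gcongr
  exact normSeq_le_tnorm n _

/-- Proposition 3 of the paper: for every `‖·‖_{T̃}`-normalized
block basis `(x₁, …, x_p)` and all scalars `(a_k)`,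
`‖∑ a_k x_k‖_{T̃} ≤ 2 ‖∑ a_k e_{i_k}‖_{T̈}` where `i_k = max supp x_k`; moreover the
inequality holds at every finite level `n`. -/
theorem statement3 (seq : Ordinal → ℕ → Ordinal) (hseq : IsCtblLadder seq)
    (a b : Ordinal) (ha : a.card ≤ Cardinal.aleph0) (hb : b.card ≤ Cardinal.aleph0)
    (hb0 : b ≠ 0) (p : ℕ) (x : Fin p → (ℕ →₀ ℝ))
    (hx0 : ∀ k, x k ≠ 0)
    (hblock : ∀ k l : Fin p, k < l → finLT (x k).support (x l).support)
    (hnorm : ∀ k, tnorm (schreier seq a) (schreier seq b) (x k) = 1)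
    (c : Fin p → ℝ) :
    tnorm (schreier seq a) (schreier seq b) (∑ k, c k • x k) ≤
      2 * tnorm (schreier seq a) (sqFam (schreier seq b))
        (∑ k, c k • Finsupp.single ((x k).support.sup id) (1 : ℝ)) ∧
    ∀ n : ℕ, normSeq (schreier seq a) (schreier seq b) n (∑ k, c k • x k) ≤
      2 * normSeq (schreier seq a) (sqFam (schreier seq b)) n
        (∑ k, c k • Finsupp.single ((x k).support.sup id) (1 : ℝ)) :=
  statement3_general seq hseq a b ha hb p x hblock hnorm c

end LTIndex
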